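/- arXiv:2304.08033 — 5 statements merged into one kernel-verified Lean document; each statement's English description precedes it below -/
import Mathlib

section
/- For a d-tuple of bounded linear operators T = (T_1,...,T_d) on a complex Hilbert space H and any x ∈ H, the inequality Σ_{k=1}^d ||T_k x||^2 + Σ_{k=1}^d |⟨T_k^2 x, x⟩| ≤ 2√d · w_e(T) · (Σ_{k=1}^d ||T_k x||^2)^{1/2} · ||x|| holds. -/
noncomputable def jnorm {H : Type*} [NormedAddCommGroup H] [InnerProductSpace ℂ H]
    {d : ℕ} (T : Fin d → H →L[ℂ] H) : ℝ :=
  sSup {r | ∃ x : H, ‖x‖ = 1 ∧ r = Real.sqrt (∑ k, ‖T k x‖ ^ 2)}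

noncomputable def we {H : Type*} [NormedAddCommGroup H] [InnerProductSpace ℂ H]
    {d : ℕ} (T : Fin d → H →L[ℂ] H) : ℝ :=
  sSup {r | ∃ x : H, ‖x‖ = 1 ∧ r = Real.sqrt (∑ k, ‖(inner ℂ (T k x) x : ℂ)‖ ^ 2)}

section aux

variable {H : Type*} [NormedAddCommGroup H] [InnerProductSpace ℂ H] {d : ℕ}
  (T : Fin d → H →L[ℂ] H)

lemma we_nonneg : 0 ≤ we T := by
  apply Real.sSup_nonneg
  rintro r ⟨y, hy, rfl⟩
  exact Real.sqrt_nonneg _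

lemma we_bdd : BddAbove {r | ∃ x : H, ‖x‖ = 1 ∧
    r = Real.sqrt (∑ k, ‖(inner ℂ (T k x) x : ℂ)‖ ^ 2)} := by
  refine ⟨Real.sqrt (∑ k, ‖T k‖ ^ 2), ?_⟩
  rintro r ⟨y, hy, rfl⟩
  apply Real.sqrt_le_sqrt
  apply Finset.sum_le_sum
  intro k _
  have h1 := norm_inner_le_norm (𝕜 := ℂ) (T k y) y
  have h2 : ‖T k y‖ ≤ ‖T k‖ := by simpa [hy] using (T k).le_opNorm y
  have h3 : ‖(inner ℂ (T k y) y : ℂ)‖ ≤ ‖T k‖ := by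
    calc ‖(inner ℂ (T k y) y : ℂ)‖ ≤ ‖T k y‖ * ‖y‖ := h1
    _ = ‖T k y‖ := by rw [hy, mul_one]
    _ ≤ ‖T k‖ := h2
  exact pow_le_pow_left₀ (norm_nonneg _) h3 2

lemma inner_le_we_unit (k : Fin d) {y : H} (hy : ‖y‖ = 1) :
    ‖(inner ℂ (T k y) y : ℂ)‖ ≤ we T := by
  have hmem : Real.sqrt (∑ j, ‖(inner ℂ (T j y) y : ℂ)‖ ^ 2) ∈
      {r | ∃ x : H, ‖x‖ = 1 ∧ r = Real.sqrt (∑ k, ‖(inner ℂ (T k x) x : ℂ)‖ ^ 2)} :=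
    ⟨y, hy, rfl⟩
  have h1 : ‖(inner ℂ (T k y) y : ℂ)‖ ≤ Real.sqrt (∑ j, ‖(inner ℂ (T j y) y : ℂ)‖ ^ 2) := by
    rw [show ‖(inner ℂ (T k y) y : ℂ)‖ = Real.sqrt (‖(inner ℂ (T k y) y : ℂ)‖ ^ 2) by
      rw [Real.sqrt_sq (norm_nonneg _)]]
    apply Real.sqrt_le_sqrt
    exact Finset.single_le_sum (f := fun j => ‖(inner ℂ (T j y) y : ℂ)‖ ^ 2)
      (fun j _ => sq_nonneg _) (Finset.mem_univ k)
  exact h1.trans (le_csSup (we_bdd T) hmem)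

lemma inner_le_we (k : Fin d) (y : H) :
    ‖(inner ℂ (T k y) y : ℂ)‖ ≤ we T * ‖y‖ ^ 2 := by
  rcases eq_or_ne y 0 with rfl | hy
  · simp
  · have hn : 0 < ‖y‖ := norm_pos_iff.mpr hy
    set u : H := ((‖y‖⁻¹ : ℝ) : ℂ) • y with hu
    have hun : ‖u‖ = 1 := by
      rw [hu, norm_smul]
      simp [abs_of_pos (inv_pos.mpr hn), inv_mul_cancel₀ hn.ne']
    have := inner_le_we_unit T k hun
    have hc : (inner ℂ (T k u) u : ℂ) = ((‖y‖⁻¹ : ℝ) : ℂ) ^ 2 * inner ℂ (T k y) y := by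
      rw [hu, map_smul, inner_smul_left, inner_smul_right, Complex.conj_ofReal]
      ring
    rw [hc] at this
    rw [norm_mul, norm_pow] at this
    have h4 : ‖(((‖y‖⁻¹ : ℝ)) : ℂ)‖ = ‖y‖⁻¹ := by
      simp [abs_of_pos (inv_pos.mpr hn)]
    rw [h4] at this
    have := mul_le_mul_of_nonneg_right this (le_of_lt (pow_pos hn 2))
    calc ‖(inner ℂ (T k y) y : ℂ)‖
        = ‖y‖⁻¹ ^ 2 * ‖(inner ℂ (T k y) y : ℂ)‖ * ‖y‖ ^ 2 := by
          field_simp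
    _ ≤ we T * ‖y‖ ^ 2 := by
          nlinarith [norm_nonneg (inner ℂ (T k y) y : ℂ), pow_pos hn 2]

lemma polar (k : Fin d) (a b : H) :
    ‖(inner ℂ (T k a) b : ℂ) + inner ℂ (T k b) a‖ ≤ we T * (‖a‖ ^ 2 + ‖b‖ ^ 2) := by
  have h1 := inner_le_we T k (a + b)
  have h2 := inner_le_we T k (a - b)
  have e1 : (inner ℂ (T k (a + b)) (a + b) : ℂ)
      = inner ℂ (T k a) a + inner ℂ (T k a) b + inner ℂ (T k b) a + inner ℂ (T k b) b := by
    rw [map_add, inner_add_left, inner_add_right, inner_add_right]; ring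
  have e2 : (inner ℂ (T k (a - b)) (a - b) : ℂ)
      = inner ℂ (T k a) a - inner ℂ (T k a) b - inner ℂ (T k b) a + inner ℂ (T k b) b := by
    rw [map_sub, inner_sub_left, inner_sub_right, inner_sub_right]; ring
  have key : (2 : ℂ) * ((inner ℂ (T k a) b : ℂ) + inner ℂ (T k b) a)
      = inner ℂ (T k (a + b)) (a + b) - inner ℂ (T k (a - b)) (a - b) := by
    rw [e1, e2]; ring
  have hpar : ‖a + b‖ ^ 2 + ‖a - b‖ ^ 2 = 2 * (‖a‖ ^ 2 + ‖b‖ ^ 2) := by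
    have := parallelogram_law_with_norm ℂ a b
    nlinarith [this]
  have h3 : ‖(2 : ℂ) * ((inner ℂ (T k a) b : ℂ) + inner ℂ (T k b) a)‖
      ≤ we T * (‖a + b‖ ^ 2) + we T * (‖a - b‖ ^ 2) := by
    rw [key]
    exact (norm_sub_le _ _).trans (add_le_add h1 h2)
  rw [norm_mul] at h3
  simp only [Complex.norm_ofNat] at h3
  have h4 : we T * ‖a + b‖ ^ 2 + we T * ‖a - b‖ ^ 2
      = we T * (2 * (‖a‖ ^ 2 + ‖b‖ ^ 2)) := by rw [← mul_add, hpar]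
  rw [h4] at h3
  linarith

lemma pointwise (k : Fin d) (x : H) :
    ‖T k x‖ ^ 2 + ‖(inner ℂ ((T k) ((T k) x)) x : ℂ)‖
      ≤ 2 * we T * ‖T k x‖ * ‖x‖ := by
  rcases eq_or_ne (T k x) 0 with hu | hu
  · rw [hu]
    simp
  · have hm : 0 < ‖T k x‖ := norm_pos_iff.mpr hu
    have hx : x ≠ 0 := by rintro rfl; simp at hu
    have hn : 0 < ‖x‖ := norm_pos_iff.mpr hx
    set u : H := T k x with hudef
    set z : ℂ := inner ℂ (T k u) x with hz
    set c : ℂ := Complex.exp ((z.arg / 2 : ℝ) * Complex.I) with hc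
    have hcnorm : ‖c‖ = 1 := by
      rw [hc]
      exact Complex.norm_exp_ofReal_mul_I _
    have hcc : c * c = Complex.exp ((z.arg : ℝ) * Complex.I) := by
      rw [hc, ← Complex.exp_add]
      congr 1
      push_cast
      ring
    have hzc : (starRingEnd ℂ) c * z = (‖z‖ : ℂ) * c := by
      have habs : (‖z‖ : ℂ) * Complex.exp ((z.arg : ℝ) * Complex.I) = z := by
        simpa using Complex.norm_mul_exp_arg_mul_I z
      have hconj : (starRingEnd ℂ) c * c = 1 := by
        rw [← Complex.normSq_eq_conj_mul_self, Complex.normSq_eq_norm_sq,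
          hcnorm]
        norm_num
      calc (starRingEnd ℂ) c * z = (starRingEnd ℂ) c * ((‖z‖ : ℂ) * (c * c)) := by
            rw [hcc, habs]
      _ = (‖z‖ : ℂ) * c * ((starRingEnd ℂ) c * c) := by ring
      _ = (‖z‖ : ℂ) * c := by rw [hconj, mul_one]
    set s : ℂ := ((‖x‖ / ‖u‖ : ℝ) : ℂ) * c with hs
    set b : H := s • u with hb
    have hbn : ‖b‖ = ‖x‖ := by
      rw [hb, norm_smul, hs, norm_mul, hcnorm]
      simp only [mul_one, Complex.norm_real, Real.norm_eq_abs]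
      rw [abs_of_pos (div_pos hn hm)]
      field_simp
    have hab : (inner ℂ (T k x) b : ℂ) + inner ℂ (T k b) x
        = ((‖x‖ / ‖u‖ : ℝ) : ℂ) * c * ((‖u‖ : ℂ) ^ 2 + (‖z‖ : ℂ)) := by
      rw [hb, inner_smul_right, map_smul, inner_smul_left, hs]
      rw [← hudef, ← hz]
      have hiu : (inner ℂ u u : ℂ) = ((‖u‖ : ℝ) : ℂ) ^ 2 := by
        rw [inner_self_eq_norm_sq_to_K]; norm_cast
      rw [hiu]
      rw [map_mul]
      have : (starRingEnd ℂ) (((‖x‖ / ‖u‖ : ℝ)) : ℂ) = ((‖x‖ / ‖u‖ : ℝ) : ℂ) :=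
        Complex.conj_ofReal _
      rw [this]
      rw [mul_assoc ((‖x‖ / ‖u‖ : ℝ) : ℂ) ((starRingEnd ℂ) c) z, hzc]
      ring
    have hpol := polar T k x b
    rw [hab] at hpol
    rw [norm_mul, norm_mul, hcnorm, mul_one] at hpol
    have h5 : ‖(((‖x‖ / ‖u‖ : ℝ)) : ℂ)‖ = ‖x‖ / ‖u‖ := by
      rw [Complex.norm_real, Real.norm_eq_abs, abs_of_pos (div_pos hn hm)]
    have h6 : ‖((‖u‖ : ℂ) ^ 2 + (‖z‖ : ℂ))‖ = ‖u‖ ^ 2 + ‖z‖ := by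
      have : ((‖u‖ : ℂ) ^ 2 + (‖z‖ : ℂ)) = (((‖u‖ ^ 2 + ‖z‖ : ℝ)) : ℂ) := by push_cast; ring
      rw [this, Complex.norm_real, Real.norm_eq_abs, abs_of_nonneg (by positivity)]
    rw [h5, h6, hbn] at hpol
    -- hpol : ‖x‖/‖u‖ * (‖u‖^2 + ‖z‖) ≤ we T * (‖x‖^2 + ‖x‖^2)
    have hfinal : ‖u‖ ^ 2 + ‖z‖ ≤ 2 * we T * ‖u‖ * ‖x‖ := by
      have h7 : ‖x‖ / ‖u‖ * (‖u‖ ^ 2 + ‖z‖) ≤ 2 * we T * ‖x‖ ^ 2 := by nlinarith [hpol]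
      have h8 := mul_le_mul_of_nonneg_left h7 (le_of_lt (div_pos hm hn))
      calc ‖u‖ ^ 2 + ‖z‖ = ‖u‖ / ‖x‖ * (‖x‖ / ‖u‖ * (‖u‖ ^ 2 + ‖z‖)) := by
            field_simp
      _ ≤ ‖u‖ / ‖x‖ * (2 * we T * ‖x‖ ^ 2) := by
            apply mul_le_mul_of_nonneg_left h7 (le_of_lt (div_pos hm hn))
      _ = 2 * we T * ‖u‖ * ‖x‖ := by field_simp
    exact hfinal

end aux

theorem stmt1 {H : Type*} [NormedAddCommGroup H] [InnerProductSpace ℂ H] {d : ℕ} (T : Fin d → H →L[ℂ] H) (x : H) :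
    (∑ k, ‖T k x‖ ^ 2) + ∑ k, ‖(inner ℂ ((T k) ((T k) x)) x : ℂ)‖ ≤
      2 * Real.sqrt d * we T * Real.sqrt (∑ k, ‖T k x‖ ^ 2) * ‖x‖ := by
  have hsum : (∑ k, ‖T k x‖ ^ 2) + ∑ k, ‖(inner ℂ ((T k) ((T k) x)) x : ℂ)‖
      ≤ ∑ k, 2 * we T * ‖T k x‖ * ‖x‖ := by
    rw [← Finset.sum_add_distrib]
    exact Finset.sum_le_sum fun k _ => pointwise T k x
  have hcs : (∑ k, ‖T k x‖) ≤ Real.sqrt d * Real.sqrt (∑ k, ‖T k x‖ ^ 2) := by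
    have h := sq_sum_le_card_mul_sum_sq (s := Finset.univ) (f := fun k : Fin d => ‖T k x‖)
    simp only [Finset.card_univ, Fintype.card_fin] at h
    rw [← Real.sqrt_mul (Nat.cast_nonneg d)]
    rw [show (∑ k, ‖T k x‖) = Real.sqrt ((∑ k, ‖T k x‖) ^ 2) by
      rw [Real.sqrt_sq (Finset.sum_nonneg fun k _ => norm_nonneg _)]]
    exact Real.sqrt_le_sqrt h
  have hwe := we_nonneg T
  calc (∑ k, ‖T k x‖ ^ 2) + ∑ k, ‖(inner ℂ ((T k) ((T k) x)) x : ℂ)‖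
      ≤ ∑ k, 2 * we T * ‖T k x‖ * ‖x‖ := hsum
  _ = 2 * we T * ‖x‖ * ∑ k, ‖T k x‖ := by
      rw [Finset.mul_sum]; congr 1; ext k; ring
  _ ≤ 2 * we T * ‖x‖ * (Real.sqrt d * Real.sqrt (∑ k, ‖T k x‖ ^ 2)) := by
      apply mul_le_mul_of_nonneg_left hcs (by positivity)
  _ = 2 * Real.sqrt d * we T * Real.sqrt (∑ k, ‖T k x‖ ^ 2) * ‖x‖ := by ring
end

section
/- For a d-tuple of bounded linear operators T = (T_1,...,T_d) on a complex Hilbert space with ||T|| ≠ 0, the inequality (1/(2√d))·( ||T|| + c_e(T²)/||T|| ) ≤ w_e(T) holds, where T² = (T_1²,...,T_d²). -/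
noncomputable def ce {H : Type*} [NormedAddCommGroup H] [InnerProductSpace ℂ H]
    {d : ℕ} (T : Fin d → H →L[ℂ] H) : ℝ :=
  sInf {r | ∃ x : H, ‖x‖ = 1 ∧ r = Real.sqrt (∑ k, ‖(inner ℂ (T k x) x : ℂ)‖ ^ 2)}


section helper

variable {H : Type*} [NormedAddCommGroup H] [InnerProductSpace ℂ H] {d : ℕ}

lemma we_mem_le (T : Fin d → H →L[ℂ] H) {x : H} (hx : ‖x‖ = 1) :
    Real.sqrt (∑ k, ‖(inner ℂ (T k x) x : ℂ)‖ ^ 2) ≤ we T := by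
  apply le_csSup
  · refine ⟨Real.sqrt (∑ k, ‖T k‖ ^ 2), ?_⟩
    rintro r ⟨z, hz, rfl⟩
    apply Real.sqrt_le_sqrt
    apply Finset.sum_le_sum
    intro k _
    have h1 : ‖(inner ℂ (T k z) z : ℂ)‖ ≤ ‖T k z‖ * ‖z‖ := norm_inner_le_norm _ _
    have h2 : ‖T k z‖ ≤ ‖T k‖ * ‖z‖ := (T k).le_opNorm z
    rw [hz] at h1 h2
    have : ‖(inner ℂ (T k z) z : ℂ)‖ ≤ ‖T k‖ := by simpa using h1.trans (by simpa using h2)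
    exact pow_le_pow_left₀ (norm_nonneg _) this 2
  · exact ⟨x, hx, rfl⟩

lemma jnorm_mem_le (T : Fin d → H →L[ℂ] H) {x : H} (hx : ‖x‖ = 1) :
    Real.sqrt (∑ k, ‖T k x‖ ^ 2) ≤ jnorm T := by
  apply le_csSup
  · refine ⟨Real.sqrt (∑ k, ‖T k‖ ^ 2), ?_⟩
    rintro r ⟨z, hz, rfl⟩
    apply Real.sqrt_le_sqrt
    apply Finset.sum_le_sum
    intro k _
    have h2 : ‖T k z‖ ≤ ‖T k‖ * ‖z‖ := (T k).le_opNorm z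
    rw [hz, mul_one] at h2
    exact pow_le_pow_left₀ (norm_nonneg _) h2 2
  · exact ⟨x, hx, rfl⟩

lemma single_le_sqrt_sum {f : Fin d → ℝ} (k : Fin d) (hf : 0 ≤ f k) :
    f k ≤ Real.sqrt (∑ j, f j ^ 2) := by
  rw [show f k = Real.sqrt (f k ^ 2) from (Real.sqrt_sq hf).symm]
  apply Real.sqrt_le_sqrt
  exact Finset.single_le_sum (f := fun j => f j ^ 2) (fun j _ => sq_nonneg _) (Finset.mem_univ k)

lemma we_pointwise (T : Fin d → H →L[ℂ] H) (k : Fin d) (u : H) :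
    ‖(inner ℂ (T k u) u : ℂ)‖ ≤ we T * ‖u‖ ^ 2 := by
  rcases eq_or_ne u 0 with rfl | hu
  · simp
  · have hc : (0:ℝ) < ‖u‖ := norm_pos_iff.mpr hu
    set c : ℝ := ‖u‖ with hc_def
    set x : H := ((c:ℂ))⁻¹ • u with hx_def
    have hx : ‖x‖ = 1 := by
      rw [hx_def, norm_smul]
      simp [abs_of_pos hc, inv_mul_cancel₀ hc.ne']
      exact inv_mul_cancel₀ hc.ne'
    have hTx : T k x = ((c:ℂ))⁻¹ • T k u := by rw [hx_def, map_smul]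
    have hinner : ‖(inner ℂ (T k x) x : ℂ)‖ = c⁻¹ * c⁻¹ * ‖(inner ℂ (T k u) u : ℂ)‖ := by
      rw [hx_def, hTx, inner_smul_left, inner_smul_right, norm_mul, norm_mul]
      simp [abs_of_pos hc]
      ring
    have h1 : ‖(inner ℂ (T k x) x : ℂ)‖ ≤ we T := by
      refine le_trans (single_le_sqrt_sum (f := fun j => ‖(inner ℂ (T j x) x : ℂ)‖) k (norm_nonneg _)) ?_
      exact we_mem_le T hx
    have : c⁻¹ * c⁻¹ * ‖(inner ℂ (T k u) u : ℂ)‖ ≤ we T := hinner ▸ h1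
    calc ‖(inner ℂ (T k u) u : ℂ)‖ = c^2 * (c⁻¹ * c⁻¹ * ‖(inner ℂ (T k u) u : ℂ)‖) := by
          field_simp
      _ ≤ c^2 * we T := by
          apply mul_le_mul_of_nonneg_left this (by positivity)
      _ = we T * ‖u‖ ^ 2 := by rw [hc_def]; ring

open Complex in
lemma step {H : Type*} [NormedAddCommGroup H] [InnerProductSpace ℂ H]
    (S : H →L[ℂ] H) (M : ℝ)
    (hM : ∀ u : H, ‖(inner ℂ (S u) u : ℂ)‖ ≤ M * ‖u‖ ^ 2)
    (x : H) (hx : ‖x‖ = 1) (h : S x ≠ 0) :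
    ‖S x‖ + ‖(inner ℂ (S (S x)) x : ℂ)‖ / ‖S x‖ ≤ 2 * M := by
  set a : ℝ := ‖S x‖ with ha_def
  have ha : 0 < a := norm_pos_iff.mpr h
  set v : H := ((a : ℂ))⁻¹ • S x with hv_def
  have hv : ‖v‖ = 1 := by
    rw [hv_def, norm_smul]
    simp [norm_inv, ha.le, abs_of_pos ha, inv_mul_cancel₀ ha.ne']
    exact inv_mul_cancel₀ ha.ne'
  set b : ℂ := inner ℂ (S v) x with hb_def
  have hSv : S v = ((a:ℂ))⁻¹ • S (S x) := by rw [hv_def, map_smul]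
  have hb : b = ((a:ℂ))⁻¹ * inner ℂ (S (S x)) x := by
    rw [hb_def, hSv, inner_smul_left]
    simp
  have hbn : ‖b‖ = ‖(inner ℂ (S (S x)) x : ℂ)‖ / a := by
    rw [hb, norm_mul]
    simp [div_eq_inv_mul, ha.le, abs_of_pos ha]
  have h1 : (inner ℂ (S x) v : ℂ) = (a : ℂ) := by
    rw [hv_def, inner_smul_right, inner_self_eq_norm_sq_to_K]
    rw [sq]
    field_simp
    rw [← ha_def, sq, mul_div_assoc]
    simp [ha.ne']
  set θ : ℝ := Complex.arg b with hθ_def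
  set lm : ℂ := Complex.exp ((θ/2 : ℝ) * Complex.I) with hlm_def
  have hlm : ‖lm‖ = 1 := by
    rw [hlm_def, Complex.norm_exp_ofReal_mul_I]
  set y : H := lm • v with hy_def
  have hy : ‖y‖ = 1 := by rw [hy_def, norm_smul, hlm, hv, one_mul]
  have hA1 : (inner ℂ (S x) y : ℂ) = lm * a := by
    rw [hy_def, inner_smul_right, h1]
  have hA2 : (inner ℂ (S y) x : ℂ) = (starRingEnd ℂ) lm * b := by
    rw [hy_def, map_smul, inner_smul_left, hb_def]
  have hconj : (starRingEnd ℂ) lm = Complex.exp (-(((θ/2 : ℝ) : ℂ) * Complex.I)) := by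
    rw [hlm_def, ← Complex.exp_conj]
    congr 1
    simp [Complex.conj_ofReal, map_ofNat]
  have hbpol : b = (‖b‖ : ℂ) * Complex.exp ((θ : ℂ) * Complex.I) :=
    (Complex.norm_mul_exp_arg_mul_I b).symm
  have harg : (-(((θ/2 : ℝ) : ℂ) * Complex.I) + (θ:ℂ) * Complex.I) = ((θ/2 : ℝ) : ℂ) * Complex.I := by
    push_cast; ring
  have hconjb : (starRingEnd ℂ) lm * b = (‖b‖ : ℂ) * lm := by
    calc (starRingEnd ℂ) lm * b
        = (‖b‖ : ℂ) * (Complex.exp (-(((θ/2 : ℝ) : ℂ) * Complex.I)) * Complex.exp ((θ:ℂ) * Complex.I)) := by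
          rw [hconj]; conv_lhs => rw [hbpol]
          ring
      _ = (‖b‖ : ℂ) * lm := by rw [← Complex.exp_add, harg, hlm_def]
  set A : ℂ := inner ℂ (S x) y + inner ℂ (S y) x with hA_def
  have hAval : A = lm * ((a : ℂ) + (‖b‖ : ℂ)) := by
    rw [hA_def, hA1, hA2, hconjb]; ring
  have hAnorm : ‖A‖ = a + ‖b‖ := by
    rw [hAval, norm_mul, hlm, one_mul, ← Complex.ofReal_add, Complex.norm_real,
      Real.norm_eq_abs, _root_.abs_of_nonneg (by positivity)]
  -- polarization
  have hpol : (inner ℂ (S (x+y)) (x+y) : ℂ) - inner ℂ (S (x-y)) (x-y) = 2 * A := by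
    rw [hA_def]
    simp only [map_add, map_sub, inner_add_left, inner_add_right, inner_sub_left, inner_sub_right]
    ring
  have hbound : ‖(2 : ℂ) * A‖ ≤ 4 * M := by
    rw [← hpol]
    calc ‖(inner ℂ (S (x+y)) (x+y) : ℂ) - inner ℂ (S (x-y)) (x-y)‖
        ≤ ‖(inner ℂ (S (x+y)) (x+y) : ℂ)‖ + ‖(inner ℂ (S (x-y)) (x-y) : ℂ)‖ := norm_sub_le _ _
      _ ≤ M * ‖x+y‖^2 + M * ‖x-y‖^2 := add_le_add (hM _) (hM _)
      _ = M * (‖x+y‖*‖x+y‖ + ‖x-y‖*‖x-y‖) := by ring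
      _ = M * (2 * (‖x‖*‖x‖ + ‖y‖*‖y‖)) := by linear_combination M * parallelogram_law_with_norm ℂ x y
      _ = 4 * M := by rw [hx, hy]; ring
  have : 2 * ‖A‖ ≤ 4 * M := by
    have := hbound
    rw [norm_mul] at this
    norm_num at this
    simpa using this
  have hfin : ‖A‖ ≤ 2 * M := by linarith
  calc a + ‖(inner ℂ (S (S x)) x : ℂ)‖ / a = a + ‖b‖ := by rw [hbn]
    _ = ‖A‖ := hAnorm.symm
    _ ≤ 2 * M := hfin


end helper

theorem stmt3 {H : Type*} [NormedAddCommGroup H] [InnerProductSpace ℂ H] {d : ℕ} (T : Fin d → H →L[ℂ] H) (hT : jnorm T ≠ 0) :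
    (1 / (2 * Real.sqrt d)) * (jnorm T + ce (fun k => (T k) ^ 2) / jnorm T) ≤ we T := by
  obtain ⟨x₀, hx₀⟩ : ∃ x : H, ‖x‖ = 1 := by
    by_contra hcon
    push_neg at hcon
    apply hT
    have hset : {r | ∃ x : H, ‖x‖ = 1 ∧ r = Real.sqrt (∑ k, ‖T k x‖ ^ 2)} = ∅ := by
      ext r
      simp only [Set.mem_setOf_eq, Set.mem_empty_iff_false, iff_false]
      rintro ⟨x, hx, -⟩
      exact hcon x hx
    unfold jnorm
    rw [hset, Real.sSup_empty]
  have hd : d ≠ 0 := by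
    rintro rfl
    apply hT
    have hset : {r | ∃ x : H, ‖x‖ = 1 ∧ r = Real.sqrt (∑ k : Fin 0, ‖T k x‖ ^ 2)} = {0} := by
      ext r
      simp only [Set.mem_setOf_eq, Set.mem_singleton_iff]
      constructor
      · rintro ⟨x, hx, rfl⟩; simp
      · rintro rfl; exact ⟨x₀, hx₀, by simp⟩
    unfold jnorm
    rw [hset, csSup_singleton]
  set N := jnorm T with hN_def
  set W := we T with hW_def
  set Ce := ce (fun k => T k ^ 2) with hCe_def
  have hW0 : 0 ≤ W := le_trans (Real.sqrt_nonneg _) (we_mem_le T hx₀)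
  have hN0 : 0 < N :=
    lt_of_le_of_ne (le_trans (Real.sqrt_nonneg _) (jnorm_mem_le T hx₀)) (Ne.symm hT)
  have hCe0 : 0 ≤ Ce := by
    apply Real.sInf_nonneg
    rintro r ⟨x, hx, rfl⟩
    exact Real.sqrt_nonneg _
  have hCe_le : ∀ x : H, ‖x‖ = 1 →
      Ce ≤ Real.sqrt (∑ k, ‖(inner ℂ ((T k ^ 2) x) x : ℂ)‖ ^ 2) := by
    intro x hx
    apply csInf_le ⟨0, by rintro r ⟨z, hz, rfl⟩; exact Real.sqrt_nonneg _⟩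
    exact ⟨x, hx, rfl⟩
  have pow2 : ∀ (k : Fin d) (u : H), (T k ^ 2) u = T k (T k u) := by
    intro k u
    rw [sq, ContinuousLinearMap.mul_apply]
  have key : ∀ x : H, ‖x‖ = 1 →
      (∑ k, ‖T k x‖ ^ 2) + 2 * Ce + Ce ^ 2 / N ^ 2 ≤ 4 * d * W ^ 2 := by
    intro x hx
    set c : Fin d → ℝ := fun k => ‖(inner ℂ ((T k ^ 2) x) x : ℂ)‖ with hc_def
    have hck : ∀ k, 0 ≤ c k := fun k => norm_nonneg _
    have hsum_c : Real.sqrt (∑ k, (c k) ^ 2) ≤ ∑ k, c k := by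
      have h1 : (∑ k, (c k) ^ 2) ≤ (∑ k, c k) ^ 2 := by
        have h2 : ∀ k ∈ Finset.univ, (c k) ^ 2 ≤ c k * (∑ j, c j) := by
          intro k _
          rw [sq]
          exact mul_le_mul_of_nonneg_left
            (Finset.single_le_sum (fun j _ => hck j) (Finset.mem_univ k)) (hck k)
        calc (∑ k, (c k) ^ 2) ≤ ∑ k, c k * (∑ j, c j) := Finset.sum_le_sum h2
          _ = (∑ k, c k) ^ 2 := by rw [← Finset.sum_mul, sq]
      calc Real.sqrt (∑ k, (c k) ^ 2) ≤ Real.sqrt ((∑ k, c k) ^ 2) := Real.sqrt_le_sqrt h1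
        _ = ∑ k, c k := Real.sqrt_sq (Finset.sum_nonneg fun k _ => hck k)
    have hCeC : Ce ≤ Real.sqrt (∑ k, (c k) ^ 2) := hCe_le x hx
    have hCe_sum : Ce ≤ ∑ k, c k := hCeC.trans hsum_c
    have hCe_sq : Ce ^ 2 ≤ ∑ k, (c k) ^ 2 := by
      have h := pow_le_pow_left₀ hCe0 hCeC 2
      rwa [Real.sq_sqrt (Finset.sum_nonneg fun k _ => sq_nonneg _)] at h
    have hperk : ∀ k, ‖T k x‖ ^ 2 + 2 * c k + (c k) ^ 2 / N ^ 2 ≤ 4 * W ^ 2 := by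
      intro k
      by_cases hz : T k x = 0
      · have hc0 : c k = 0 := by simp [hc_def, pow2, hz]
        rw [hc0, hz]
        simp
        positivity
      · have hstep := step (T k) W (we_pointwise T k) x hx hz
        have hck' : c k = ‖(inner ℂ (T k (T k x)) x : ℂ)‖ := by rw [hc_def]; simp [pow2]
        rw [← hck'] at hstep
        set t := ‖T k x‖ with ht_def
        have ht : 0 < t := norm_pos_iff.mpr hz
        have htN : t ≤ N :=
          le_trans (single_le_sqrt_sum (f := fun j => ‖T j x‖) k (norm_nonneg _))
            (jnorm_mem_le T hx)
        have hsq : (t + c k / t) ^ 2 ≤ (2 * W) ^ 2 :=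
          pow_le_pow_left₀ (by positivity) hstep 2
        have hexp : (t + c k / t) ^ 2 = t ^ 2 + 2 * c k + (c k) ^ 2 / t ^ 2 := by
          field_simp
          ring
        have hmono : (c k) ^ 2 / N ^ 2 ≤ (c k) ^ 2 / t ^ 2 := by
          apply div_le_div_of_nonneg_left (sq_nonneg _) (by positivity)
          nlinarith
        nlinarith [hsq, hexp, hmono]
    have hsum : ∑ k, (‖T k x‖ ^ 2 + 2 * c k + (c k) ^ 2 / N ^ 2) ≤ (d : ℝ) * (4 * W ^ 2) := by
      calc ∑ k, (‖T k x‖ ^ 2 + 2 * c k + (c k) ^ 2 / N ^ 2)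
          ≤ ∑ _k : Fin d, (4 * W ^ 2) := Finset.sum_le_sum fun k _ => hperk k
        _ = (d : ℝ) * (4 * W ^ 2) := by
            rw [Finset.sum_const, Finset.card_univ, Fintype.card_fin, nsmul_eq_mul]
    have hsplit : ∑ k, (‖T k x‖ ^ 2 + 2 * c k + (c k) ^ 2 / N ^ 2)
        = (∑ k, ‖T k x‖ ^ 2) + 2 * (∑ k, c k) + (∑ k, (c k) ^ 2) / N ^ 2 := by
      rw [Finset.sum_add_distrib, Finset.sum_add_distrib, ← Finset.mul_sum, ← Finset.sum_div]
    rw [hsplit] at hsum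
    have h3 : Ce ^ 2 / N ^ 2 ≤ (∑ k, (c k) ^ 2) / N ^ 2 := by
      gcongr
    nlinarith [hsum, hCe_sum, h3]
  set B := 4 * d * W ^ 2 - 2 * Ce - Ce ^ 2 / N ^ 2 with hB_def
  have hNB : N ≤ Real.sqrt B := by
    apply Real.sSup_le
    · rintro r ⟨x, hx, rfl⟩
      apply Real.sqrt_le_sqrt
      have h := key x hx
      rw [hB_def]
      linarith
    · exact Real.sqrt_nonneg _
  have hB0 : 0 ≤ B := by
    have h := key x₀ hx₀
    have h0 : 0 ≤ ∑ k, ‖T k x₀‖ ^ 2 := Finset.sum_nonneg fun k _ => sq_nonneg _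
    rw [hB_def]
    linarith
  have hN2 : N ^ 2 ≤ B := by
    have h := pow_le_pow_left₀ hN0.le hNB 2
    rwa [Real.sq_sqrt hB0] at h
  have hmain : (N + Ce / N) ^ 2 ≤ (2 * Real.sqrt d * W) ^ 2 := by
    have e1 : (N + Ce / N) ^ 2 = N ^ 2 + 2 * Ce + Ce ^ 2 / N ^ 2 := by
      field_simp
      ring
    have e2 : (2 * Real.sqrt d * W) ^ 2 = 4 * d * W ^ 2 := by
      rw [mul_pow, mul_pow, Real.sq_sqrt (Nat.cast_nonneg d)]
      ring
    rw [e1, e2]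
    rw [hB_def] at hN2
    linarith
  have hL0 : 0 ≤ N + Ce / N := by positivity
  have hR0 : 0 ≤ 2 * Real.sqrt d * W := by positivity
  have hLR : N + Ce / N ≤ 2 * Real.sqrt d * W := by
    have h := Real.sqrt_le_sqrt hmain
    rwa [Real.sqrt_sq hL0, Real.sqrt_sq hR0] at h
  have h2d : (0:ℝ) < 2 * Real.sqrt d :=
    mul_pos two_pos (Real.sqrt_pos.mpr (by exact_mod_cast Nat.pos_of_ne_zero hd))
  rw [one_div, inv_mul_le_iff₀ h2d]
  calc N + Ce / N ≤ 2 * Real.sqrt d * W := hLR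
    _ = 2 * Real.sqrt d * W := rfl
end

section
/- For a d-tuple of bounded operators T = (T_1,...,T_d) on a complex Hilbert space and any positive integer n, w_e(Tⁿ) ≤ √d · w_e(T)ⁿ, where Tⁿ = (T_1ⁿ,...,T_dⁿ). -/
open Polynomial Finset ContinuousLinearMap


private lemma prod_one_sub_zeta {n : ℕ} (hn : 0 < n) {ζ : ℂ} (hζ : IsPrimitiveRoot ζ n) :
    ∏ k ∈ Finset.range n, ((1 : ℂ[X]) - C (ζ ^ k) * X) = 1 - X ^ n := by
  apply Polynomial.funext
  intro z
  simp only [eval_prod, eval_sub, eval_one, eval_mul, eval_C, eval_X, eval_pow]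
  rcases eq_or_ne z 0 with rfl | hz
  · simp [zero_pow hn.ne']
  · have h1 : ∀ k ∈ Finset.range n, (1 : ℂ) - ζ ^ k * z = z * (z⁻¹ - ζ ^ k) := by
      intro k _
      field_simp
    rw [Finset.prod_congr rfl h1, Finset.prod_mul_distrib, Finset.prod_const, Finset.card_range]
    have h3 := congrArg (eval z⁻¹) (X_pow_sub_C_eq_prod hζ hn (one_pow n))
    simp only [eval_sub, eval_pow, eval_X, eval_C, eval_prod, mul_one] at h3
    rw [← h3]
    field_simp
    rw [one_div, inv_pow, mul_sub, mul_inv_cancel₀ (pow_ne_zero _ hz), mul_one]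

private lemma zpow_mod {n : ℕ} {ζ : ℂ} (hζ : IsPrimitiveRoot ζ n) (a : ℕ) :
    ζ ^ (a % n) = ζ ^ a := by
  conv_rhs => rw [← Nat.div_add_mod a n]
  rw [pow_add, pow_mul, hζ.pow_eq_one, one_pow, one_mul]

private lemma prod_erase_zero {n : ℕ} (hn : 0 < n) {ζ : ℂ} (hζ : IsPrimitiveRoot ζ n) :
    ∏ k ∈ (Finset.range n).erase 0, ((1:ℂ) - ζ ^ k) = n := by
  obtain ⟨m, rfl⟩ : ∃ m, n = m + 1 := ⟨n - 1, by omega⟩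
  push_cast
  rw [← IsPrimitiveRoot.prod_one_sub_pow_eq_order hζ]
  refine Finset.prod_nbij' (fun k => k - 1) (fun k => k + 1) ?_ ?_ ?_ ?_ ?_ <;>
    simp only [Finset.mem_erase, Finset.mem_range]
  · intro a ha; omega
  · intro a ha; omega
  · intro a ha; omega
  · intro a ha; omega
  · intro a ha
    have h2 : a - 1 + 1 = a := by omega
    rw [h2]

private lemma prod_erase_eq_card {n : ℕ} (hn : 0 < n) {ζ : ℂ} (hζ : IsPrimitiveRoot ζ n)
    {j : ℕ} (hj : j < n) :
    ∏ k ∈ (Finset.range n).erase j, ((1:ℂ) - ζ ^ k * (ζ ^ j)⁻¹) = n := by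
  rw [← prod_erase_zero hn hζ]
  refine Finset.prod_nbij' (fun k => (k + (n - j)) % n) (fun m => (m + j) % n) ?_ ?_ ?_ ?_ ?_ <;>
    simp only [Finset.mem_erase, Finset.mem_range]
  · rintro a ⟨haj, ha⟩
    refine ⟨?_, Nat.mod_lt _ hn⟩
    intro h0
    have hd := Nat.dvd_of_mod_eq_zero h0
    have := Nat.eq_of_dvd_of_lt_two_mul (by omega) hd (by omega)
    omega
  · rintro a ⟨ha0, ha⟩
    refine ⟨?_, Nat.mod_lt _ hn⟩
    intro h0
    have hdm := Nat.div_add_mod (a + j) n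
    rw [h0] at hdm
    have ha' : a = n * ((a + j) / n) := by omega
    rcases Nat.eq_zero_or_pos ((a + j) / n) with hq | hq
    · rw [hq, Nat.mul_zero] at ha'; omega
    · have h2 : n * 1 ≤ n * ((a + j) / n) := Nat.mul_le_mul_left n hq
      omega
  · rintro a ⟨haj, ha⟩
    rw [Nat.mod_add_mod]
    have h1 : a + (n - j) + j = a + n := by omega
    rw [h1, Nat.add_mod_right, Nat.mod_eq_of_lt ha]
  · rintro a ⟨ha0, ha⟩
    rw [Nat.mod_add_mod]
    have h1 : a + j + (n - j) = a + n := by omega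
    rw [h1, Nat.add_mod_right, Nat.mod_eq_of_lt ha]
  · rintro a ⟨haj, ha⟩
    rw [zpow_mod hζ, pow_add]
    have h1 : ζ ^ (n - j) * ζ ^ j = 1 := by
      rw [← pow_add]
      have h2 : n - j + j = n := by omega
      rw [h2, hζ.pow_eq_one]
    congr 1
    exact congrArg (ζ ^ a * ·) (eq_inv_of_mul_eq_one_left h1).symm

private lemma sum_q_eq {n : ℕ} (hn : 0 < n) {ζ : ℂ} (hζ : IsPrimitiveRoot ζ n) :
    ∑ j ∈ Finset.range n, ∏ k ∈ (Finset.range n).erase j, ((1:ℂ[X]) - C (ζ ^ k) * X)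
      = C (n : ℂ) := by
  rw [← sub_eq_zero]
  have hζ0 : ζ ≠ 0 := hζ.ne_zero hn.ne'
  apply Polynomial.eq_zero_of_natDegree_lt_card_of_eval_eq_zero' _
    ((Finset.range n).image (fun j => (ζ ^ j)⁻¹))
  · intro w hw
    obtain ⟨j, hj, rfl⟩ := Finset.mem_image.mp hw
    rw [eval_sub, eval_C, eval_finset_sum, Finset.sum_eq_single_of_mem j hj]
    · rw [eval_prod]
      simp only [eval_sub, eval_one, eval_mul, eval_C, eval_X]
      rw [prod_erase_eq_card hn hζ (Finset.mem_range.mp hj), sub_self]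
    · intro i hi hij
      rw [eval_prod]
      apply Finset.prod_eq_zero (Finset.mem_erase.mpr ⟨Ne.symm hij, hj⟩)
      simp only [eval_sub, eval_one, eval_mul, eval_C, eval_X]
      rw [mul_inv_cancel₀ (pow_ne_zero _ hζ0), sub_self]
  · have hcard : #((Finset.range n).image fun j => (ζ ^ j)⁻¹) = n := by
      rw [Finset.card_image_of_injOn, Finset.card_range]
      intro a ha b hb hab
      exact hζ.pow_inj (Finset.mem_range.mp ha) (Finset.mem_range.mp hb) (inv_injective hab)
    rw [hcard]
    refine lt_of_le_of_lt (natDegree_sub_le _ _) ?_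
    rw [natDegree_C, max_eq_left (Nat.zero_le _)]
    have hd : ∀ j ∈ Finset.range n,
        (∏ k ∈ (Finset.range n).erase j, ((1:ℂ[X]) - C (ζ ^ k) * X)).natDegree ≤ n - 1 := by
      intro j hj
      refine le_trans (natDegree_prod_le _ _) ?_
      refine le_trans (Finset.sum_le_card_nsmul _ _ 1 ?_) ?_
      · intro k hk
        refine le_trans (natDegree_sub_le _ _) ?_
        refine max_le (by simp) (le_trans (natDegree_C_mul_le _ _) (by simp))
      · rw [Finset.card_erase_of_mem hj, Finset.card_range, smul_eq_mul, mul_one]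
    exact lt_of_le_of_lt (natDegree_sum_le_of_forall_le _ _ hd) (by omega)

private lemma pearcy_re {H : Type*} [NormedAddCommGroup H] [InnerProductSpace ℂ H]
    (S : H →L[ℂ] H) (h : ∀ y : H, ‖(inner ℂ (S y) y : ℂ)‖ ≤ ‖y‖ ^ 2)
    {n : ℕ} (hn : 0 < n) (x : H) :
    (inner ℂ ((S ^ n) x) x : ℂ).re ≤ ‖x‖ ^ 2 := by
  obtain ⟨ζ, hζ⟩ : ∃ ζ : ℂ, IsPrimitiveRoot ζ n :=
    ⟨_, Complex.isPrimitiveRoot_exp n hn.ne'⟩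
  have hζn : ∀ j : ℕ, ‖ζ ^ j‖ = 1 := by
    intro j
    rw [norm_pow]
    have h1 : ‖ζ‖ ^ n = 1 := by rw [← norm_pow, hζ.pow_eq_one, norm_one]
    have h2 : ‖ζ‖ = 1 := by
      have := (pow_left_inj₀ (norm_nonneg ζ) zero_le_one hn.ne').mp (by rw [h1, one_pow])
      exact this
    rw [h2, one_pow]
  set b : ℕ → H →L[ℂ] H := fun j =>
    aeval S (∏ k ∈ (Finset.range n).erase j, ((1:ℂ[X]) - C (ζ ^ k) * X)) with hb
  have h1 : ∀ j ∈ Finset.range n, (1 - ζ ^ j • S) * b j = 1 - S ^ n := by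
    intro j hj
    have e1 := Finset.mul_prod_erase (Finset.range n)
      (fun k => (1:ℂ[X]) - C (ζ ^ k) * X) hj
    rw [prod_one_sub_zeta hn hζ] at e1
    have e2 := congrArg (aeval S) e1
    have ea : (aeval S) ((1:ℂ[X]) - C (ζ ^ j) * X) = 1 - ζ ^ j • S := by
      generalize ζ ^ j = c
      simp [Algebra.smul_def]
    have eb : (aeval S) ((1:ℂ[X]) - X ^ n) = 1 - S ^ n := by simp
    rw [map_mul, ea, eb] at e2
    exact e2
  have h2 : ∑ j ∈ Finset.range n, b j = (n : ℂ) • 1 := by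
    have e2 := congrArg (aeval S) (sum_q_eq hn hζ)
    simpa only [map_sum, aeval_C, Algebra.algebraMap_eq_smul_one] using e2
  have hterm : ∀ j ∈ Finset.range n, 0 ≤ (inner ℂ ((1 - S ^ n) x) (b j x) : ℂ).re := by
    intro j hj
    set y := b j x with hy
    have e3 : (1 - S ^ n) x = y - ζ ^ j • S y := by
      rw [← h1 j hj]
      simp [mul_apply, sub_apply, smul_apply]
      rfl
    rw [e3, inner_sub_left, inner_smul_left]
    have e4 : (inner ℂ y y : ℂ).re = ‖y‖ ^ 2 := by
      rw [inner_self_eq_norm_sq_to_K]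
      norm_cast
    rw [Complex.sub_re, e4]
    have e5 : ((starRingEnd ℂ) (ζ ^ j) * inner ℂ (S y) y).re ≤ ‖y‖ ^ 2 := by
      refine le_trans (Complex.re_le_norm _) ?_
      rw [norm_mul, RCLike.norm_conj, hζn j, one_mul]
      exact h y
    linarith
  have hsum : 0 ≤ (inner ℂ ((1 - S ^ n) x) (((n : ℂ) • (1 : H →L[ℂ] H)) x) : ℂ).re := by
    rw [← h2]
    rw [ContinuousLinearMap.sum_apply, inner_sum, Complex.re_sum]
    exact Finset.sum_nonneg hterm
  rw [smul_apply, ContinuousLinearMap.one_apply, inner_smul_right] at hsum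
  have hre : ((n : ℂ) * inner ℂ ((1 - S ^ n) x) x).re
      = (n : ℝ) * (inner ℂ ((1 - S ^ n) x) x : ℂ).re := by
    rw [show ((n : ℂ)) = (((n : ℝ)) : ℂ) by norm_cast, Complex.re_ofReal_mul]
  rw [hre] at hsum
  have h0 : 0 ≤ (inner ℂ ((1 - S ^ n) x) x : ℂ).re := by
    have hnp : (0 : ℝ) < n := by exact_mod_cast hn
    nlinarith
  have e6 : (inner ℂ ((1 - S ^ n) x) x : ℂ) = inner ℂ x x - inner ℂ ((S ^ n) x) x := by
    simp [sub_apply, ContinuousLinearMap.one_apply, inner_sub_left]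
  rw [e6, Complex.sub_re] at h0
  have e7 : (inner ℂ x x : ℂ).re = ‖x‖ ^ 2 := by
    rw [inner_self_eq_norm_sq_to_K]; norm_cast
  rw [e7] at h0
  linarith

private lemma pearcy {H : Type*} [NormedAddCommGroup H] [InnerProductSpace ℂ H]
    (S : H →L[ℂ] H) (h : ∀ y : H, ‖(inner ℂ (S y) y : ℂ)‖ ≤ ‖y‖ ^ 2)
    {n : ℕ} (hn : 0 < n) (x : H) :
    ‖(inner ℂ ((S ^ n) x) x : ℂ)‖ ≤ ‖x‖ ^ 2 := by
  set c : ℂ := inner ℂ ((S ^ n) x) x with hc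
  rcases eq_or_ne c 0 with h0 | h0
  · rw [h0, norm_zero]; positivity
  have hcn : ‖c‖ ≠ 0 := norm_ne_zero_iff.mpr h0
  obtain ⟨θ, hθ⟩ := IsAlgClosed.exists_pow_nat_eq (k := ℂ) (c / (‖c‖ : ℂ)) hn
  have hθn : ‖θ‖ = 1 := by
    have h1 : ‖θ‖ ^ n = 1 := by
      rw [← norm_pow, hθ, norm_div, Complex.norm_real, Real.norm_eq_abs,
        abs_of_nonneg (norm_nonneg c), div_self hcn]
    exact (pow_left_inj₀ (norm_nonneg θ) zero_le_one hn.ne').mp (by rw [h1, one_pow])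
  have h' : ∀ y : H, ‖(inner ℂ ((θ • S) y) y : ℂ)‖ ≤ ‖y‖ ^ 2 := by
    intro y
    rw [smul_apply, inner_smul_left, norm_mul, RCLike.norm_conj, hθn, one_mul]
    exact h y
  have hp := pearcy_re (θ • S) h' hn x
  rw [_root_.smul_pow, smul_apply, inner_smul_left, ← hc, hθ] at hp
  have hcc : (starRingEnd ℂ) (c / (‖c‖ : ℂ)) * c = ((‖c‖ : ℂ)) := by
    rw [map_div₀, Complex.conj_ofReal, div_mul_eq_mul_div, mul_comm, Complex.mul_conj,
      Complex.normSq_eq_norm_sq]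
    push_cast
    rw [sq, mul_div_assoc, div_self (Complex.ofReal_ne_zero.mpr hcn), mul_one]
  rw [hcc, Complex.ofReal_re] at hp
  exact hp

theorem stmt6 {H : Type*} [NormedAddCommGroup H] [InnerProductSpace ℂ H] {d : ℕ} (T : Fin d → H →L[ℂ] H) (n : ℕ) (hn : 0 < n) :
    we (fun k => (T k) ^ n) ≤ Real.sqrt d * (we T) ^ n := by
  classical
  set M := we T with hM
  have hbdd : BddAbove {r | ∃ x : H, ‖x‖ = 1 ∧
      r = Real.sqrt (∑ k, ‖(inner ℂ (T k x) x : ℂ)‖ ^ 2)} := by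
    refine ⟨Real.sqrt (∑ k, ‖T k‖ ^ 2), ?_⟩
    rintro r ⟨x, hx, rfl⟩
    apply Real.sqrt_le_sqrt
    apply Finset.sum_le_sum
    intro k _
    have h1 : ‖(inner ℂ (T k x) x : ℂ)‖ ≤ ‖T k x‖ * ‖x‖ := norm_inner_le_norm _ _
    have h2 : ‖T k x‖ ≤ ‖T k‖ := by
      have := (T k).le_opNorm x
      rwa [hx, mul_one] at this
    have h3 : ‖(inner ℂ (T k x) x : ℂ)‖ ≤ ‖T k‖ := by
      rw [hx, mul_one] at h1
      exact h1.trans h2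
    exact pow_le_pow_left₀ (norm_nonneg _) h3 2
  have hM0 : 0 ≤ M := by
    apply Real.sSup_nonneg
    rintro r ⟨x, hx, rfl⟩
    exact Real.sqrt_nonneg _
  have hMel : ∀ x : H, ‖x‖ = 1 →
      Real.sqrt (∑ k, ‖(inner ℂ (T k x) x : ℂ)‖ ^ 2) ≤ M :=
    fun x hx => le_csSup hbdd ⟨x, hx, rfl⟩
  have hMk : ∀ (k : Fin d) (x : H), ‖x‖ = 1 → ‖(inner ℂ (T k x) x : ℂ)‖ ≤ M := by
    intro k x hx
    have h1 : ‖(inner ℂ (T k x) x : ℂ)‖ ^ 2 ≤ ∑ j, ‖(inner ℂ (T j x) x : ℂ)‖ ^ 2 :=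
      Finset.single_le_sum (f := fun j => ‖(inner ℂ (T j x) x : ℂ)‖ ^ 2)
        (fun j _ => sq_nonneg _) (Finset.mem_univ k)
    calc ‖(inner ℂ (T k x) x : ℂ)‖ = Real.sqrt (‖(inner ℂ (T k x) x : ℂ)‖ ^ 2) :=
          (Real.sqrt_sq (norm_nonneg _)).symm
      _ ≤ Real.sqrt (∑ j, ‖(inner ℂ (T j x) x : ℂ)‖ ^ 2) := Real.sqrt_le_sqrt h1
      _ ≤ M := hMel x hx
  have hMall : ∀ (k : Fin d) (y : H), ‖(inner ℂ (T k y) y : ℂ)‖ ≤ M * ‖y‖ ^ 2 := by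
    intro k y
    rcases eq_or_ne y 0 with rfl | hy
    · simp
    · have hyn : ‖y‖ ≠ 0 := norm_ne_zero_iff.mpr hy
      set u : H := ‖y‖⁻¹ • y with hu
      have hun : ‖u‖ = 1 := by
        rw [hu, norm_smul, norm_inv, norm_norm, inv_mul_cancel₀ hyn]
      have hyu : y = ((‖y‖ : ℂ)) • u := by
        rw [hu, Complex.coe_smul, smul_smul, mul_inv_cancel₀ hyn, one_smul]
      have := hMk k u hun
      calc ‖(inner ℂ (T k y) y : ℂ)‖
          = ‖(inner ℂ (T k (((‖y‖ : ℂ)) • u)) (((‖y‖ : ℂ)) • u) : ℂ)‖ := by rw [← hyu]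
        _ = ‖y‖ ^ 2 * ‖(inner ℂ (T k u) u : ℂ)‖ := by
            rw [map_smul, inner_smul_left, inner_smul_right, norm_mul, norm_mul,
              RCLike.norm_conj, Complex.norm_real, Real.norm_eq_abs,
              abs_of_nonneg (norm_nonneg y)]
            ring
        _ ≤ ‖y‖ ^ 2 * M := by
            exact mul_le_mul_of_nonneg_left this (sq_nonneg _)
        _ = M * ‖y‖ ^ 2 := by ring
  rcases eq_or_lt_of_le hM0 with heq | hpos
  · -- M = 0 : every T k = 0
    have hTk : ∀ k, T k = 0 := by
      intro k
      have h0 : ∀ y : H, (inner ℂ (T k y) y : ℂ) = 0 := by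
        intro y
        have := hMall k y
        rw [← heq, zero_mul] at this
        exact norm_le_zero_iff.mp this
      have h2 : (T k : H →ₗ[ℂ] H) = 0 := by
        rw [← inner_map_self_eq_zero]
        intro z
        exact h0 z
      ext y
      have := LinearMap.congr_fun h2 y
      simpa using this
    rw [we]
    apply Real.sSup_le
    · rintro r ⟨x, hx, rfl⟩
      have : ∀ k : Fin d, ((fun k => T k ^ n) k) x = 0 := by
        intro k
        show ((T k) ^ n) x = 0
        rw [hTk k, zero_pow hn.ne']
        rfl
      simp only [this, inner_zero_left, norm_zero]
      simp [← heq, zero_pow hn.ne']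
    · positivity
  · -- M > 0
    have hkey : ∀ (k : Fin d) (x : H), ‖x‖ = 1 →
        ‖(inner ℂ (((T k) ^ n) x) x : ℂ)‖ ≤ M ^ n := by
      intro k x hx
      set S : H →L[ℂ] H := ((M : ℂ))⁻¹ • T k with hS
      have hMc : ‖((M : ℂ))⁻¹‖ = M⁻¹ := by
        rw [norm_inv, Complex.norm_real, Real.norm_eq_abs, abs_of_pos hpos]
      have hSh : ∀ y : H, ‖(inner ℂ (S y) y : ℂ)‖ ≤ ‖y‖ ^ 2 := by
        intro y
        rw [hS, smul_apply, inner_smul_left, norm_mul, RCLike.norm_conj, hMc]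
        calc M⁻¹ * ‖(inner ℂ (T k y) y : ℂ)‖ ≤ M⁻¹ * (M * ‖y‖ ^ 2) :=
              mul_le_mul_of_nonneg_left (hMall k y) (inv_nonneg.mpr hM0)
          _ = ‖y‖ ^ 2 := by field_simp
      have hp := pearcy S hSh hn x
      rw [hS, _root_.smul_pow, smul_apply, inner_smul_left, norm_mul, RCLike.norm_conj,
        norm_pow, hMc, hx, one_pow] at hp
      calc ‖(inner ℂ (((T k) ^ n) x) x : ℂ)‖
          = M ^ n * ((M⁻¹) ^ n * ‖(inner ℂ (((T k) ^ n) x) x : ℂ)‖) := by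
            field_simp
            rw [one_div, inv_pow, mul_assoc, mul_inv_cancel₀ (pow_ne_zero _ hpos.ne'), mul_one]
        _ ≤ M ^ n * 1 := mul_le_mul_of_nonneg_left hp (pow_nonneg hM0 n)
        _ = M ^ n := mul_one _
    rw [we]
    apply Real.sSup_le
    · rintro r ⟨x, hx, rfl⟩
      have hsum : (∑ k : Fin d, ‖(inner ℂ (((fun k => T k ^ n) k) x) x : ℂ)‖ ^ 2)
          ≤ (d : ℝ) * (M ^ n) ^ 2 := by
        calc (∑ k : Fin d, ‖(inner ℂ (((fun k => T k ^ n) k) x) x : ℂ)‖ ^ 2)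
            ≤ ∑ _k : Fin d, (M ^ n) ^ 2 := by
              apply Finset.sum_le_sum
              intro k _
              exact pow_le_pow_left₀ (norm_nonneg _) (hkey k x hx) 2
          _ = (d : ℝ) * (M ^ n) ^ 2 := by
              rw [Finset.sum_const, Finset.card_univ, Fintype.card_fin, nsmul_eq_mul]
      calc Real.sqrt (∑ k : Fin d, ‖(inner ℂ (((fun k => T k ^ n) k) x) x : ℂ)‖ ^ 2)
          ≤ Real.sqrt ((d : ℝ) * (M ^ n) ^ 2) := Real.sqrt_le_sqrt hsum
        _ = Real.sqrt d * (M ^ n) := by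
            rw [Real.sqrt_mul (Nat.cast_nonneg d), Real.sqrt_sq (pow_nonneg hM0 n)]
    · positivity
end

section
/- If S = (S_1,...,S_d) and T = (T_1,...,T_d) are d-tuples of bounded operators with S_k T_k = T_k S_k for all k, then w_e(ST) ≤ 2√d · w_e(S) · w_e(T), where ST = (S_1T_1,...,S_dT_d). -/
open scoped ComplexConjugate

namespace Stmt11Aux

variable {H : Type*} [NormedAddCommGroup H] [InnerProductSpace ℂ H]

local notation "⟪" x ", " y "⟫" => @inner ℂ _ _ x y

noncomputable abbrev we' {d : ℕ} (T : Fin d → H →L[ℂ] H) : ℝ := we T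

noncomputable def nr (A : H →L[ℂ] H) : ℝ :=
  sSup {r | ∃ x : H, ‖x‖ = 1 ∧ r = ‖(⟪A x, x⟫ : ℂ)‖}

lemma nr_bdd (A : H →L[ℂ] H) :
    BddAbove {r | ∃ x : H, ‖x‖ = 1 ∧ r = ‖(⟪A x, x⟫ : ℂ)‖} := by
  refine ⟨‖A‖, ?_⟩
  rintro r ⟨x, hx, rfl⟩
  calc ‖(⟪A x, x⟫ : ℂ)‖ ≤ ‖A x‖ * ‖x‖ := norm_inner_le_norm _ _
    _ ≤ (‖A‖ * ‖x‖) * ‖x‖ := by gcongr; exact A.le_opNorm x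
    _ = ‖A‖ := by rw [hx]; ring

lemma nr_nonneg (A : H →L[ℂ] H) : 0 ≤ nr A :=
  Real.sSup_nonneg (by rintro r ⟨x, hx, rfl⟩; positivity)

lemma inner_le_nr (A : H →L[ℂ] H) {x : H} (hx : ‖x‖ = 1) :
    ‖(⟪A x, x⟫ : ℂ)‖ ≤ nr A :=
  le_csSup (nr_bdd A) ⟨x, hx, rfl⟩

lemma nr_le (A : H →L[ℂ] H) {M : ℝ} (hM : 0 ≤ M)
    (h : ∀ x : H, ‖x‖ = 1 → ‖(⟪A x, x⟫ : ℂ)‖ ≤ M) : nr A ≤ M :=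
  Real.sSup_le (by rintro r ⟨x, hx, rfl⟩; exact h x hx) hM

lemma inner_le_nr' (A : H →L[ℂ] H) (z : H) :
    ‖(⟪A z, z⟫ : ℂ)‖ ≤ nr A * ‖z‖ ^ 2 := by
  rcases eq_or_ne z 0 with rfl | hz
  · simp
  · have hnz : (0:ℝ) < ‖z‖ := norm_pos_iff.2 hz
    set c : ℂ := ((‖z‖⁻¹ : ℝ) : ℂ) with hcdef
    have hu : ‖c • z‖ = 1 := by
      rw [norm_smul]
      simp [hcdef, inv_mul_cancel₀ hnz.ne']
    have h1 := inner_le_nr A hu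
    have h2 : (⟪A (c • z), c • z⟫ : ℂ) = conj c * (c * ⟪A z, z⟫) := by
      rw [map_smul, inner_smul_left, inner_smul_right]
    rw [h2] at h1
    have h3 : ‖conj c * (c * (⟪A z, z⟫ : ℂ))‖ = ‖z‖⁻¹ * (‖z‖⁻¹ * ‖(⟪A z, z⟫ : ℂ)‖) := by
      simp [norm_mul, hcdef, abs_of_nonneg (inv_nonneg.2 hnz.le)]
    rw [h3] at h1
    have := mul_le_mul_of_nonneg_left h1 (le_of_lt (mul_pos hnz hnz))
    calc ‖(⟪A z, z⟫ : ℂ)‖ = (‖z‖ * ‖z‖) * (‖z‖⁻¹ * (‖z‖⁻¹ * ‖(⟪A z, z⟫ : ℂ)‖)) := by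
          field_simp
      _ ≤ (‖z‖ * ‖z‖) * nr A := this
      _ = nr A * ‖z‖ ^ 2 := by ring


set_option maxHeartbeats 1000000 in
lemma sq_inner_le (A : H →L[ℂ] H) {x : H} (hx : ‖x‖ = 1) :
    ‖(⟪A (A x), x⟫ : ℂ)‖ ≤ nr A ^ 2 := by
  set m : ℝ := nr A with hm
  have hm0 : 0 ≤ m := nr_nonneg A
  set c : ℂ := (⟪A (A x), x⟫ : ℂ) with hcdef
  rcases eq_or_ne (A x) 0 with hAx | hAx
  · have : c = 0 := by rw [hcdef, hAx, map_zero, inner_zero_left]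
    rw [this]; simpa using sq_nonneg m
  · set θ : ℝ := c.arg with hθ
    set v : ℂ := Complex.exp ((θ/2 : ℝ) * Complex.I) with hvdef
    have hv1 : ‖v‖ = 1 := by
      rw [hvdef]
      exact Complex.norm_exp_ofReal_mul_I _
    set B : H →L[ℂ] H := v • A with hB
    -- quadratic form bound for B
    have hq : ∀ z : H, |(⟪B z, z⟫ : ℂ).re| ≤ m * ‖z‖ ^ 2 := by
      intro z
      have h1 : (⟪B z, z⟫ : ℂ) = conj v * ⟪A z, z⟫ := by
        rw [hB, ContinuousLinearMap.smul_apply, inner_smul_left]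
      calc |(⟪B z, z⟫ : ℂ).re| ≤ ‖(⟪B z, z⟫ : ℂ)‖ := Complex.abs_re_le_norm _
        _ = ‖(⟪A z, z⟫ : ℂ)‖ := by
            rw [h1, norm_mul, RCLike.norm_conj, hv1, one_mul]
        _ ≤ m * ‖z‖ ^ 2 := inner_le_nr' A z
    -- the rotated square has real nonneg inner product
    have hBB : B (B x) = (v * v) • (A (A x)) := by
      simp [hB, map_smul, smul_smul]
    have hconj : conj (v * v) = Complex.exp (-(θ : ℂ) * Complex.I) := by
      have hcv : conj v = Complex.exp (-((θ/2 : ℝ) * Complex.I)) := by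
        rw [hvdef, ← Complex.exp_conj]
        congr 1
        rw [map_mul, Complex.conj_ofReal, Complex.conj_I]
        ring
      rw [map_mul, hcv, ← Complex.exp_add]
      congr 1
      push_cast
      ring
    have hP : (⟪B (B x), x⟫ : ℂ) = (‖c‖ : ℂ) := by
      rw [hBB, inner_smul_left, ← hcdef, hconj]
      conv_lhs => rw [show c = (‖c‖ : ℂ) * Complex.exp (θ * Complex.I) from
        (Complex.norm_mul_exp_arg_mul_I c).symm]
      rw [mul_comm, mul_assoc, ← Complex.exp_add]
      simp
    -- main estimate
    set r : ℝ := ‖A x‖ with hrdef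
    have hr : 0 < r := norm_pos_iff.2 hAx
    have hBx : ‖B x‖ = r := by
      rw [hB, ContinuousLinearMap.smul_apply, norm_smul, hv1, one_mul]
    set s : ℝ := r⁻¹ with hsdef
    set w : H := (s : ℂ) • B x with hwdef
    have hw : ‖w‖ = s * r := by
      have hs0 : (0:ℝ) ≤ s := by rw [hsdef]; exact inv_nonneg.2 hr.le
      rw [hwdef, norm_smul, hBx, Complex.norm_real, Real.norm_eq_abs, abs_of_nonneg hs0]
    have hdiff : (⟪B (x + w), x + w⟫ : ℂ) - ⟪B (x - w), x - w⟫
        = ((2 * s * r ^ 2 : ℝ) : ℂ) + ((2 * s : ℝ) : ℂ) * ⟪B (B x), x⟫ := by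
      have h2 : (⟪B x, B x⟫ : ℂ) = ((r ^ 2 : ℝ) : ℂ) := by
        rw [← hBx, inner_self_eq_norm_sq_to_K]
        push_cast
        norm_num
      simp only [hwdef, map_add, map_sub, map_smul, inner_add_left, inner_add_right,
        inner_sub_left, inner_sub_right, inner_smul_left, inner_smul_right,
        Complex.conj_ofReal, h2]
      push_cast
      ring
    have hre : (⟪B (x + w), x + w⟫ : ℂ).re - (⟪B (x - w), x - w⟫ : ℂ).re
        = 2 * s * r ^ 2 + 2 * s * ‖c‖ := by
      have := congrArg Complex.re hdiff
      simpa [hP, Complex.sub_re, Complex.add_re, ← Complex.ofReal_pow,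
        Complex.re_ofReal_mul, Complex.ofReal_re] using this
    have hpar : ‖x + w‖ ^ 2 + ‖x - w‖ ^ 2 = 2 * (1 + (s * r) ^ 2) := by
      have := parallelogram_law_with_norm ℂ x w
      rw [← hw]
      nlinarith [this, hx]
    have h1 : (⟪B (x + w), x + w⟫ : ℂ).re ≤ m * ‖x + w‖ ^ 2 :=
      le_trans (le_abs_self _) (hq _)
    have h2 : -(m * ‖x - w‖ ^ 2) ≤ (⟪B (x - w), x - w⟫ : ℂ).re :=
      neg_le_of_abs_le (hq _)
    have hmain : 2 * s * r ^ 2 + 2 * s * ‖c‖ ≤ 2 * m * (1 + (s * r) ^ 2) := by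
      nlinarith [h1, h2, hre, hpar]
    have hsr : s * r = 1 := inv_mul_cancel₀ hr.ne'
    have hsr2 : s * r ^ 2 = r := by
      rw [sq, ← mul_assoc, hsr, one_mul]
    have hcr : ‖c‖ = r * (s * ‖c‖) := by
      rw [← mul_assoc, mul_comm r s, hsr, one_mul]
    clear_value w s B r v θ c m
    have h4 : (s * r) ^ 2 = 1 := by rw [hsr]; norm_num
    have h6 : 2 * s * r ^ 2 = 2 * r := by rw [mul_assoc, hsr2]
    have e2 : s * ‖c‖ ≤ 2 * m - r := by nlinarith [hmain, h4, h6]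
    have e3 : ‖c‖ ≤ r * (2 * m - r) := by
      rw [hcr]; exact mul_le_mul_of_nonneg_left e2 hr.le
    nlinarith [e3, sq_nonneg (m - r)]


lemma we_bdd {d : ℕ} (A : Fin d → H →L[ℂ] H) :
    BddAbove {r | ∃ x : H, ‖x‖ = 1 ∧ r = Real.sqrt (∑ k, ‖(inner ℂ (A k x) x : ℂ)‖ ^ 2)} := by
  refine ⟨Real.sqrt (∑ k, ‖A k‖ ^ 2), ?_⟩
  rintro r ⟨x, hx, rfl⟩
  apply Real.sqrt_le_sqrt
  apply Finset.sum_le_sum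
  intro k _
  have h1 : ‖(⟪A k x, x⟫ : ℂ)‖ ≤ ‖A k‖ :=
    calc ‖(⟪A k x, x⟫ : ℂ)‖ ≤ ‖A k x‖ * ‖x‖ := norm_inner_le_norm _ _
      _ ≤ (‖A k‖ * ‖x‖) * ‖x‖ := by gcongr; exact (A k).le_opNorm x
      _ = ‖A k‖ := by rw [hx]; ring
  exact pow_le_pow_left₀ (norm_nonneg _) h1 2

lemma we_nonneg {d : ℕ} (A : Fin d → H →L[ℂ] H) : 0 ≤ we' A :=
  Real.sSup_nonneg (by rintro r ⟨x, hx, rfl⟩; positivity)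

lemma le_we {d : ℕ} (A : Fin d → H →L[ℂ] H) {x : H} (hx : ‖x‖ = 1) :
    Real.sqrt (∑ k, ‖(⟪A k x, x⟫ : ℂ)‖ ^ 2) ≤ we' A :=
  le_csSup (we_bdd A) ⟨x, hx, rfl⟩

lemma we_le {d : ℕ} (A : Fin d → H →L[ℂ] H) {M : ℝ} (hM : 0 ≤ M)
    (h : ∀ x : H, ‖x‖ = 1 → Real.sqrt (∑ k, ‖(⟪A k x, x⟫ : ℂ)‖ ^ 2) ≤ M) : we' A ≤ M :=
  Real.sSup_le (by rintro r ⟨x, hx, rfl⟩; exact h x hx) hM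

lemma nr_le_we {d : ℕ} (A : Fin d → H →L[ℂ] H) (k : Fin d) : nr (A k) ≤ we' A := by
  apply nr_le _ (we_nonneg A)
  intro x hx
  refine le_trans ?_ (le_we A hx)
  rw [show ‖(⟪A k x, x⟫ : ℂ)‖ = Real.sqrt (‖(⟪A k x, x⟫ : ℂ)‖ ^ 2) from
    (Real.sqrt_sq (norm_nonneg _)).symm]
  exact Real.sqrt_le_sqrt (Finset.single_le_sum (f := fun i => ‖(⟪A i x, x⟫ : ℂ)‖ ^ 2)
    (fun i _ => by positivity) (Finset.mem_univ k))

lemma norm_coe_mul (a : ℝ) (ha : 0 ≤ a) (z : ℂ) : ‖(a : ℂ) * z‖ = a * ‖z‖ := by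
  rw [norm_mul, Complex.norm_real, Real.norm_eq_abs, abs_of_nonneg ha]

lemma nr_comb_le (A B : H →L[ℂ] H) (a b : ℝ) (ha : 0 ≤ a) (hb : 0 ≤ b) :
    nr ((a : ℂ) • A + (b : ℂ) • B) ≤ a * nr A + b * nr B := by
  have hAB : 0 ≤ a * nr A + b * nr B := by
    have h1 := nr_nonneg A; have h2 := nr_nonneg B; positivity
  apply nr_le _ hAB
  intro x hx
  have h1 : (⟪((a : ℂ) • A + (b : ℂ) • B) x, x⟫ : ℂ)
      = (a : ℂ) * ⟪A x, x⟫ + (b : ℂ) * ⟪B x, x⟫ := by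
    rw [ContinuousLinearMap.add_apply, inner_add_left, ContinuousLinearMap.smul_apply,
      ContinuousLinearMap.smul_apply, inner_smul_left, inner_smul_left,
      Complex.conj_ofReal, Complex.conj_ofReal]
  rw [h1]
  calc ‖(a : ℂ) * (⟪A x, x⟫ : ℂ) + (b : ℂ) * ⟪B x, x⟫‖
      ≤ ‖(a : ℂ) * (⟪A x, x⟫ : ℂ)‖ + ‖(b : ℂ) * (⟪B x, x⟫ : ℂ)‖ := norm_add_le _ _
    _ = a * ‖(⟪A x, x⟫ : ℂ)‖ + b * ‖(⟪B x, x⟫ : ℂ)‖ := by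
        rw [norm_coe_mul a ha, norm_coe_mul b hb]
    _ ≤ a * nr A + b * nr B := by
        gcongr <;> exact inner_le_nr _ hx

lemma nr_comb_le' (A B : H →L[ℂ] H) (a b : ℝ) (ha : 0 ≤ a) (hb : 0 ≤ b) :
    nr ((a : ℂ) • A - (b : ℂ) • B) ≤ a * nr A + b * nr B := by
  have hAB : 0 ≤ a * nr A + b * nr B := by
    have h1 := nr_nonneg A; have h2 := nr_nonneg B; positivity
  apply nr_le _ hAB
  intro x hx
  have h1 : (⟪((a : ℂ) • A - (b : ℂ) • B) x, x⟫ : ℂ)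
      = (a : ℂ) * ⟪A x, x⟫ - (b : ℂ) * ⟪B x, x⟫ := by
    rw [ContinuousLinearMap.sub_apply, inner_sub_left, ContinuousLinearMap.smul_apply,
      ContinuousLinearMap.smul_apply, inner_smul_left, inner_smul_left,
      Complex.conj_ofReal, Complex.conj_ofReal]
  rw [h1]
  calc ‖(a : ℂ) * (⟪A x, x⟫ : ℂ) - (b : ℂ) * ⟪B x, x⟫‖
      ≤ ‖(a : ℂ) * (⟪A x, x⟫ : ℂ)‖ + ‖(b : ℂ) * (⟪B x, x⟫ : ℂ)‖ := norm_sub_le _ _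
    _ = a * ‖(⟪A x, x⟫ : ℂ)‖ + b * ‖(⟪B x, x⟫ : ℂ)‖ := by
        rw [norm_coe_mul a ha, norm_coe_mul b hb]
    _ ≤ a * nr A + b * nr B := by
        gcongr <;> exact inner_le_nr _ hx


lemma key {d : ℕ} (S T : Fin d → H →L[ℂ] H)
    (hc : ∀ k, (S k).comp (T k) = (T k).comp (S k)) (t : ℝ) (ht : 0 < t) :
    we' (fun k => (S k).comp (T k)) ≤ Real.sqrt d * (t * we' S + t⁻¹ * we' T) ^ 2 / 2 := by
  have ha : 0 ≤ we' S := we_nonneg S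
  have hb : 0 ≤ we' T := we_nonneg T
  set a := we' S with hadef
  set b := we' T with hbdef
  set M : ℝ := t * a + t⁻¹ * b with hMdef
  have hM0 : 0 ≤ M := by positivity
  have hRHS : 0 ≤ Real.sqrt d * M ^ 2 / 2 := by positivity
  apply we_le _ hRHS
  intro x hx
  have hcomp : ∀ k : Fin d, ‖(⟪((S k).comp (T k)) x, x⟫ : ℂ)‖ ≤ M ^ 2 / 2 := by
    intro k
    set U : H →L[ℂ] H := ((t : ℝ) : ℂ) • S k + ((t⁻¹ : ℝ) : ℂ) • T k with hU
    set V : H →L[ℂ] H := ((t : ℝ) : ℂ) • S k - ((t⁻¹ : ℝ) : ℂ) • T k with hV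
    have hcomm : ∀ y, S k (T k y) = T k (S k y) := fun y => by
      have := ContinuousLinearMap.ext_iff.1 (hc k) y
      simpa using this
    have hne : ((t : ℝ) : ℂ) ≠ 0 := by
      exact_mod_cast ht.ne'
    have hid : (S k) ((T k) x) = ((1/4 : ℝ) : ℂ) • (U (U x)) - ((1/4 : ℝ) : ℂ) • (V (V x)) := by
      simp only [hU, hV, ContinuousLinearMap.add_apply, ContinuousLinearMap.sub_apply,
        ContinuousLinearMap.smul_apply, map_add, map_sub, map_smul, smul_add, smul_sub,
        smul_smul]
      rw [← hcomm x]
      match_scalars <;> (push_cast; field_simp; try ring)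
    have hinner : (⟪((S k).comp (T k)) x, x⟫ : ℂ)
        = ((1/4 : ℝ) : ℂ) * ⟪U (U x), x⟫ - ((1/4 : ℝ) : ℂ) * ⟪V (V x), x⟫ := by
      rw [ContinuousLinearMap.comp_apply, hid, inner_sub_left, inner_smul_left,
        inner_smul_left, Complex.conj_ofReal]
    have hnU : nr U ≤ M := by
      calc nr U ≤ t * nr (S k) + t⁻¹ * nr (T k) :=
            nr_comb_le (S k) (T k) t t⁻¹ ht.le (inv_nonneg.2 ht.le)
        _ ≤ M := by
            rw [hMdef]
            gcongr
            · exact nr_le_we S k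
            · exact nr_le_we T k
    have hnV : nr V ≤ M := by
      calc nr V ≤ t * nr (S k) + t⁻¹ * nr (T k) :=
            nr_comb_le' (S k) (T k) t t⁻¹ ht.le (inv_nonneg.2 ht.le)
        _ ≤ M := by
            rw [hMdef]
            gcongr
            · exact nr_le_we S k
            · exact nr_le_we T k
    have hU2 : ‖(⟪U (U x), x⟫ : ℂ)‖ ≤ M ^ 2 :=
      le_trans (sq_inner_le U hx) (pow_le_pow_left₀ (nr_nonneg U) hnU 2)
    have hV2 : ‖(⟪V (V x), x⟫ : ℂ)‖ ≤ M ^ 2 :=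
      le_trans (sq_inner_le V hx) (pow_le_pow_left₀ (nr_nonneg V) hnV 2)
    calc ‖(⟪((S k).comp (T k)) x, x⟫ : ℂ)‖
        ≤ ‖((1/4 : ℝ) : ℂ) * (⟪U (U x), x⟫ : ℂ)‖ + ‖((1/4 : ℝ) : ℂ) * (⟪V (V x), x⟫ : ℂ)‖ := by
          rw [hinner]; exact norm_sub_le _ _
      _ = (1/4 : ℝ) * ‖(⟪U (U x), x⟫ : ℂ)‖ + (1/4 : ℝ) * ‖(⟪V (V x), x⟫ : ℂ)‖ := by
          rw [norm_mul, norm_mul, Complex.norm_real, Real.norm_eq_abs,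
            abs_of_nonneg (by norm_num : (0:ℝ) ≤ 1/4)]
      _ ≤ (1/4 : ℝ) * M ^ 2 + (1/4 : ℝ) * M ^ 2 := by gcongr
      _ = M ^ 2 / 2 := by ring
  calc Real.sqrt (∑ k, ‖(⟪((fun k => (S k).comp (T k)) k) x, x⟫ : ℂ)‖ ^ 2)
      ≤ Real.sqrt (∑ _k : Fin d, (M ^ 2 / 2) ^ 2) := by
        apply Real.sqrt_le_sqrt
        apply Finset.sum_le_sum
        intro k _
        exact pow_le_pow_left₀ (norm_nonneg _) (hcomp k) 2
    _ = Real.sqrt d * (M ^ 2 / 2) := by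
        rw [Finset.sum_const, Finset.card_univ, Fintype.card_fin, nsmul_eq_mul,
          Real.sqrt_mul (Nat.cast_nonneg d), Real.sqrt_sq (by positivity)]
    _ = Real.sqrt d * M ^ 2 / 2 := by ring


open Filter Topology in
theorem stmt11' {d : ℕ} (S T : Fin d → H →L[ℂ] H)
    (hc : ∀ k, (S k).comp (T k) = (T k).comp (S k)) :
    we' (fun k => (S k).comp (T k)) ≤ 2 * Real.sqrt d * we' S * we' T := by
  have ha : 0 ≤ we' S := we_nonneg S
  have hb : 0 ≤ we' T := we_nonneg T
  by_cases hA0 : we' S = 0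
  · have h0 : we' (fun k => (S k).comp (T k)) ≤ 0 := by
      have hlim : Tendsto (fun t : ℝ => (Real.sqrt d * we' T ^ 2 / 2) * (t⁻¹) ^ 2)
          atTop (𝓝 0) := by
        have := (tendsto_inv_atTop_zero.pow 2).const_mul (Real.sqrt d * we' T ^ 2 / 2)
        simpa using this
      refine ge_of_tendsto hlim ?_
      filter_upwards [eventually_ge_atTop (1:ℝ)] with t htt
      have ht : (0:ℝ) < t := lt_of_lt_of_le one_pos htt
      refine le_trans (key S T hc t ht) (le_of_eq ?_)
      rw [hA0]
      ring
    calc we' (fun k => (S k).comp (T k)) ≤ 0 := h0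
      _ ≤ 2 * Real.sqrt d * we' S * we' T := by
          rw [hA0]; ring_nf; positivity
  · by_cases hB0 : we' T = 0
    · have h0 : we' (fun k => (S k).comp (T k)) ≤ 0 := by
        have hlim : Tendsto (fun u : ℝ => (Real.sqrt d * we' S ^ 2 / 2) * (u⁻¹) ^ 2)
            atTop (𝓝 0) := by
          have := (tendsto_inv_atTop_zero.pow 2).const_mul (Real.sqrt d * we' S ^ 2 / 2)
          simpa using this
        refine ge_of_tendsto hlim ?_
        filter_upwards [eventually_ge_atTop (1:ℝ)] with u huu
        have hu : (0:ℝ) < u := lt_of_lt_of_le one_pos huu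
        refine le_trans (key S T hc u⁻¹ (by positivity)) (le_of_eq ?_)
        rw [hB0, inv_inv]
        ring
      calc we' (fun k => (S k).comp (T k)) ≤ 0 := h0
        _ ≤ 2 * Real.sqrt d * we' S * we' T := by
            rw [hB0]; ring_nf; positivity
    · have hA : 0 < we' S := lt_of_le_of_ne ha (Ne.symm hA0)
      have hB : 0 < we' T := lt_of_le_of_ne hb (Ne.symm hB0)
      set sa := Real.sqrt (we' S) with hsadef
      set sb := Real.sqrt (we' T) with hsbdef
      have hsa : 0 < sa := Real.sqrt_pos.2 hA
      have hsb : 0 < sb := Real.sqrt_pos.2 hB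
      have hsa2 : sa ^ 2 = we' S := Real.sq_sqrt ha
      have hsb2 : sb ^ 2 = we' T := Real.sq_sqrt hb
      have ht : 0 < sb / sa := div_pos hsb hsa
      have h := key S T hc (sb / sa) ht
      have heq : (sb / sa) * we' S + (sb / sa)⁻¹ * we' T = 2 * (sa * sb) := by
        rw [← hsa2, ← hsb2]
        field_simp
        ring
      rw [heq] at h
      calc we' (fun k => (S k).comp (T k))
          ≤ Real.sqrt d * (2 * (sa * sb)) ^ 2 / 2 := h
        _ = 2 * Real.sqrt d * we' S * we' T := by rw [← hsa2, ← hsb2]; ring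


end Stmt11Aux

theorem stmt11 {H : Type*} [NormedAddCommGroup H] [InnerProductSpace ℂ H] {d : ℕ} (S T : Fin d → H →L[ℂ] H)
    (hc : ∀ k, (S k).comp (T k) = (T k).comp (S k)) :
    we (fun k => (S k).comp (T k)) ≤ 2 * Real.sqrt d * we S * we T := by
  have h := Stmt11Aux.stmt11' S T hc
  exact h
end

section
/- For d-tuples X, Y of bounded operators on H, max{w_e(X), w_e(Y)} ≤ w_e(N) ≤ w_e(X) + w_e(Y), where N is the d-tuple of block operators [[X_k, Y_k],[−Y_k, −X_k]] on H ⊕ H. -/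
noncomputable def blk {H : Type*} [NormedAddCommGroup H] [InnerProductSpace ℂ H]
    (A B C D : H →L[ℂ] H) : WithLp 2 (H × H) →L[ℂ] WithLp 2 (H × H) :=
  (WithLp.prodContinuousLinearEquiv 2 ℂ H H).symm.toContinuousLinearMap.comp
    (((A.comp (ContinuousLinearMap.fst ℂ H H) + B.comp (ContinuousLinearMap.snd ℂ H H)).prod
      (C.comp (ContinuousLinearMap.fst ℂ H H) + D.comp (ContinuousLinearMap.snd ℂ H H))).comp
      (WithLp.prodContinuousLinearEquiv 2 ℂ H H).toContinuousLinearMap)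

section helpers

variable {d : ℕ}

lemma sq2_eq_norm (v : Fin d → ℂ) :
    Real.sqrt (∑ k, ‖v k‖ ^ 2) = ‖(WithLp.equiv 2 (Fin d → ℂ)).symm v‖ := by
  rw [EuclideanSpace.norm_eq]
  rfl

lemma sq2_add_le (v w : Fin d → ℂ) :
    Real.sqrt (∑ k, ‖v k + w k‖ ^ 2) ≤
      Real.sqrt (∑ k, ‖v k‖ ^ 2) + Real.sqrt (∑ k, ‖w k‖ ^ 2) := by
  have h : Real.sqrt (∑ k, ‖v k + w k‖ ^ 2) = Real.sqrt (∑ k, ‖(v + w) k‖ ^ 2) := rfl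
  rw [h, sq2_eq_norm, sq2_eq_norm, sq2_eq_norm]
  have h2 : (WithLp.equiv 2 (Fin d → ℂ)).symm (v + w) =
      (WithLp.equiv 2 (Fin d → ℂ)).symm v + (WithLp.equiv 2 (Fin d → ℂ)).symm w := rfl
  rw [h2]
  exact norm_add_le _ _

lemma sq2_smul (a : ℂ) (v : Fin d → ℂ) :
    Real.sqrt (∑ k, ‖a * v k‖ ^ 2) = ‖a‖ * Real.sqrt (∑ k, ‖v k‖ ^ 2) := by
  have h : Real.sqrt (∑ k, ‖a * v k‖ ^ 2) = Real.sqrt (∑ k, ‖(a • v) k‖ ^ 2) := rfl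
  rw [h, sq2_eq_norm, sq2_eq_norm]
  have h2 : (WithLp.equiv 2 (Fin d → ℂ)).symm (a • v) =
      a • (WithLp.equiv 2 (Fin d → ℂ)).symm v := rfl
  rw [h2, norm_smul]

end helpers

section we_lemmas

variable {H : Type*} [NormedAddCommGroup H] [InnerProductSpace ℂ H] {d : ℕ}

lemma we_bddAbove (T : Fin d → H →L[ℂ] H) :
    BddAbove {r | ∃ x : H, ‖x‖ = 1 ∧ r = Real.sqrt (∑ k, ‖(inner ℂ (T k x) x : ℂ)‖ ^ 2)} := by
  refine ⟨Real.sqrt (∑ k, ‖T k‖ ^ 2), ?_⟩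
  rintro r ⟨x, hx, rfl⟩
  apply Real.sqrt_le_sqrt
  refine Finset.sum_le_sum fun k _ => ?_
  have h1 : ‖(inner ℂ (T k x) x : ℂ)‖ ≤ ‖T k x‖ * ‖x‖ := norm_inner_le_norm _ _
  have h2 : ‖T k x‖ ≤ ‖T k‖ * ‖x‖ := (T k).le_opNorm x
  rw [hx] at h1 h2
  simp only [mul_one] at h1 h2
  exact pow_le_pow_left₀ (norm_nonneg _) (h1.trans h2) 2

lemma we_nonneg_s18 (T : Fin d → H →L[ℂ] H) : 0 ≤ we T := by
  apply Real.sSup_nonneg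
  rintro r ⟨x, hx, rfl⟩
  exact Real.sqrt_nonneg _

lemma we_key (T : Fin d → H →L[ℂ] H) (x : H) :
    Real.sqrt (∑ k, ‖(inner ℂ (T k x) x : ℂ)‖ ^ 2) ≤ ‖x‖ ^ 2 * we T := by
  rcases eq_or_ne x 0 with rfl | hx
  · simp
  · set c : ℝ := ‖x‖ with hc
    have hc0 : 0 < c := norm_pos_iff.mpr hx
    set z : H := ((c : ℂ))⁻¹ • x with hz
    have hz1 : ‖z‖ = 1 := by
      rw [hz, norm_smul]
      simp only [norm_inv, Complex.norm_real, Real.norm_eq_abs, abs_of_pos hc0]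
      exact inv_mul_cancel₀ hc0.ne'
    have hxz : x = (c : ℂ) • z := by
      rw [hz, smul_smul]
      rw [mul_inv_cancel₀ (by exact_mod_cast hc0.ne')]
      simp
    have hk : ∀ k, ‖(inner ℂ (T k x) x : ℂ)‖ = c ^ 2 * ‖(inner ℂ (T k z) z : ℂ)‖ := by
      intro k
      conv_lhs => rw [hxz]
      rw [map_smul, inner_smul_left, inner_smul_right]
      rw [norm_mul, norm_mul]
      simp only [RCLike.norm_conj, Complex.norm_real, Real.norm_eq_abs, abs_of_pos hc0]
      ring
    have hsum : Real.sqrt (∑ k, ‖(inner ℂ (T k x) x : ℂ)‖ ^ 2)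
        = c ^ 2 * Real.sqrt (∑ k, ‖(inner ℂ (T k z) z : ℂ)‖ ^ 2) := by
      have h3 : ∀ k, ‖(inner ℂ (T k x) x : ℂ)‖ ^ 2 = (c ^ 2) ^ 2 * ‖(inner ℂ (T k z) z : ℂ)‖ ^ 2 := by
        intro k; rw [hk k]; ring
      rw [Finset.sum_congr rfl (fun k _ => h3 k), ← Finset.mul_sum,
        Real.sqrt_mul (by positivity)]
      congr 1
      rw [Real.sqrt_sq (by positivity)]
    rw [hsum]
    apply mul_le_mul_of_nonneg_left _ (by positivity)
    exact le_csSup (we_bddAbove T) ⟨z, hz1, rfl⟩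

end we_lemmas

theorem stmt18 {H : Type*} [NormedAddCommGroup H] [InnerProductSpace ℂ H] {d : ℕ} (X Y : Fin d → H →L[ℂ] H) :
    max (we X) (we Y) ≤ we (fun k => blk (X k) (Y k) (-(Y k)) (-(X k))) ∧
    we (fun k => blk (X k) (Y k) (-(Y k)) (-(X k))) ≤ we X + we Y := by
  set N : Fin d → WithLp 2 (H × H) →L[ℂ] WithLp 2 (H × H) :=
    fun k => blk (X k) (Y k) (-(Y k)) (-(X k)) with hN
  have hNfst : ∀ k (u : WithLp 2 (H × H)),
      (N k u).fst = X k u.fst + Y k u.snd := fun _ _ => rfl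
  have hNsnd : ∀ k (u : WithLp 2 (H × H)),
      (N k u).snd = -(Y k u.fst) + -(X k u.snd) := fun _ _ => rfl
  have hNinner : ∀ k (u : WithLp 2 (H × H)),
      (inner ℂ (N k u) u : ℂ) =
        (inner ℂ (X k u.fst) u.fst - inner ℂ (X k u.snd) u.snd)
        + (inner ℂ (Y k u.snd) u.fst - inner ℂ (Y k u.fst) u.snd) := by
    intro k u
    rw [WithLp.prod_inner_apply]
    change inner ℂ (N k u).fst u.fst + inner ℂ (N k u).snd u.snd = _
    rw [hNfst, hNsnd]
    rw [inner_add_left, inner_add_left, inner_neg_left, inner_neg_left]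
    ring
  constructor
  · -- lower bound
    refine max_le ?_ ?_
    · -- we X ≤ we N
      refine Real.sSup_le ?_ (we_nonneg_s18 N)
      rintro r ⟨x, hx, rfl⟩
      set u : WithLp 2 (H × H) := (WithLp.equiv 2 (H × H)).symm (x, 0) with hu
      have hufst : u.fst = x := rfl
      have husnd : u.snd = (0 : H) := rfl
      have hunorm : ‖u‖ = 1 := by
        have h2 : ‖u‖ ^ 2 = ‖u.fst‖ ^ 2 + ‖u.snd‖ ^ 2 := WithLp.prod_norm_sq_eq_of_L2 u
        rw [hufst, husnd, hx, norm_zero] at h2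
        have h3 : ‖u‖ ^ 2 = 1 := by rw [h2]; norm_num
        rw [← Real.sqrt_sq (norm_nonneg u), h3, Real.sqrt_one]
      have hval : ∀ k, (inner ℂ (N k u) u : ℂ) = inner ℂ (X k x) x := by
        intro k
        rw [hNinner, hufst, husnd]
        simp
      have hmem : Real.sqrt (∑ k, ‖(inner ℂ (X k x) x : ℂ)‖ ^ 2) ∈
          {r | ∃ v : WithLp 2 (H × H), ‖v‖ = 1 ∧
            r = Real.sqrt (∑ k, ‖(inner ℂ (N k v) v : ℂ)‖ ^ 2)} := by
        refine ⟨u, hunorm, ?_⟩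
        congr 1
        exact Finset.sum_congr rfl fun k _ => by rw [hval k]
      exact le_csSup (we_bddAbove N) hmem
    · -- we Y ≤ we N
      refine Real.sSup_le ?_ (we_nonneg_s18 N)
      rintro r ⟨x, hx, rfl⟩
      set a : ℂ := (((Real.sqrt 2)⁻¹ : ℝ) : ℂ) with ha
      have h4 : Real.sqrt 2 * Real.sqrt 2 = 2 := Real.mul_self_sqrt (by norm_num)
      have haa : a * a = 1 / 2 := by
        rw [ha, ← Complex.ofReal_mul, ← mul_inv, h4]
        norm_num
      have ha2 : ‖a‖ ^ 2 = 1 / 2 := by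
        rw [ha, Complex.norm_real, Real.norm_eq_abs, abs_of_pos (by positivity), ← Real.sqrt_inv,
          Real.sq_sqrt (by norm_num)]
        norm_num
      set u : WithLp 2 (H × H) := (WithLp.equiv 2 (H × H)).symm (a • x, (a * Complex.I) • x)
        with hu
      have hufst : u.fst = a • x := rfl
      have husnd : u.snd = (a * Complex.I) • x := rfl
      have hunorm : ‖u‖ = 1 := by
        have h2 : ‖u‖ ^ 2 = ‖a‖ ^ 2 * ‖x‖ ^ 2 + ‖a‖ ^ 2 * ‖x‖ ^ 2 := by
          rw [WithLp.prod_norm_sq_eq_of_L2, hufst, husnd, norm_smul, norm_smul,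
            norm_mul, Complex.norm_I, mul_one]
          ring
        rw [hx, ha2] at h2
        have h3 : ‖u‖ ^ 2 = 1 := by rw [h2]; norm_num
        rw [← Real.sqrt_sq (norm_nonneg u), h3, Real.sqrt_one]
      have hval : ∀ k, ‖(inner ℂ (N k u) u : ℂ)‖ = ‖(inner ℂ (Y k x) x : ℂ)‖ := by
        intro k
        have hid : (inner ℂ (N k u) u : ℂ) = -Complex.I * inner ℂ (Y k x) x := by
          rw [hNinner, hufst, husnd]
          rw [map_smul, map_smul, map_smul, map_smul]
          simp only [inner_smul_left, inner_smul_right]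
          have hconj : (starRingEnd ℂ) a = a := by rw [ha]; exact Complex.conj_ofReal _
          have hconjI : (starRingEnd ℂ) (a * Complex.I) = a * (-Complex.I) := by
            rw [map_mul, hconj, Complex.conj_I]
          rw [hconj, hconjI]
          linear_combination (a * a * (inner ℂ (X k x) x : ℂ)) * Complex.I_sq +
            (-2 * Complex.I * (inner ℂ (Y k x) x : ℂ)) * haa
        rw [hid, norm_mul]
        simp
      have hmem : Real.sqrt (∑ k, ‖(inner ℂ (Y k x) x : ℂ)‖ ^ 2) ∈
          {r | ∃ v : WithLp 2 (H × H), ‖v‖ = 1 ∧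
            r = Real.sqrt (∑ k, ‖(inner ℂ (N k v) v : ℂ)‖ ^ 2)} := by
        refine ⟨u, hunorm, ?_⟩
        congr 1
        exact Finset.sum_congr rfl fun k _ => by rw [hval k]
      exact le_csSup (we_bddAbove N) hmem
  · -- upper bound
    refine Real.sSup_le ?_ (add_nonneg (we_nonneg_s18 X) (we_nonneg_s18 Y))
    rintro r ⟨u, hu, rfl⟩
    set x : H := u.fst with hxdef
    set y : H := u.snd with hydef
    have hxy : ‖x‖ ^ 2 + ‖y‖ ^ 2 = 1 := by
      rw [← WithLp.prod_norm_sq_eq_of_L2 u, hu]; norm_num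
    set b : Fin d → ℂ := fun k => inner ℂ (X k x) x - inner ℂ (X k y) y with hb
    set c : Fin d → ℂ := fun k => inner ℂ (Y k y) x - inner ℂ (Y k x) y with hc
    have hbc : ∀ k, (inner ℂ (N k u) u : ℂ) = b k + c k := fun k => hNinner k u
    have step0 : Real.sqrt (∑ k, ‖(inner ℂ (N k u) u : ℂ)‖ ^ 2)
        = Real.sqrt (∑ k, ‖b k + c k‖ ^ 2) := by
      congr 1
      exact Finset.sum_congr rfl fun k _ => by rw [hbc k]
    have step1 : Real.sqrt (∑ k, ‖b k + c k‖ ^ 2) ≤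
        Real.sqrt (∑ k, ‖b k‖ ^ 2) + Real.sqrt (∑ k, ‖c k‖ ^ 2) := sq2_add_le b c
    -- bound for b
    have hbX : Real.sqrt (∑ k, ‖b k‖ ^ 2) ≤ we X := by
      have h1 : Real.sqrt (∑ k, ‖b k‖ ^ 2) ≤
          Real.sqrt (∑ k, ‖(inner ℂ (X k x) x : ℂ)‖ ^ 2) +
          Real.sqrt (∑ k, ‖(-(inner ℂ (X k y) y) : ℂ)‖ ^ 2) := by
        have := sq2_add_le (fun k => (inner ℂ (X k x) x : ℂ)) (fun k => -(inner ℂ (X k y) y : ℂ))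
        simpa [hb, sub_eq_add_neg] using this
      have h2 : Real.sqrt (∑ k, ‖(-(inner ℂ (X k y) y) : ℂ)‖ ^ 2)
          = Real.sqrt (∑ k, ‖(inner ℂ (X k y) y : ℂ)‖ ^ 2) := by simp
      calc Real.sqrt (∑ k, ‖b k‖ ^ 2)
          ≤ Real.sqrt (∑ k, ‖(inner ℂ (X k x) x : ℂ)‖ ^ 2) +
            Real.sqrt (∑ k, ‖(inner ℂ (X k y) y : ℂ)‖ ^ 2) := by rw [← h2]; exact h1
        _ ≤ ‖x‖ ^ 2 * we X + ‖y‖ ^ 2 * we X := add_le_add (we_key X x) (we_key X y)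
        _ = (‖x‖ ^ 2 + ‖y‖ ^ 2) * we X := by ring
        _ = we X := by rw [hxy, one_mul]
    -- bound for c via polarization
    have hcY : Real.sqrt (∑ k, ‖c k‖ ^ 2) ≤ we Y := by
      set p : H := x + Complex.I • y with hp
      set q : H := x - Complex.I • y with hq
      have hck : ∀ k, c k = (Complex.I / 2) * (inner ℂ (Y k p) p : ℂ)
          + (-(Complex.I / 2)) * (inner ℂ (Y k q) q : ℂ) := by
        intro k
        rw [hp, hq]
        simp only [map_add, map_sub, map_smul, inner_add_left, inner_add_right,
          inner_sub_left, inner_sub_right, inner_smul_left, inner_smul_right,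
          Complex.conj_I, hc]
        linear_combination ((inner ℂ (Y k y) x : ℂ) - (inner ℂ (Y k x) y : ℂ)) * Complex.I_sq
      have h1 : Real.sqrt (∑ k, ‖c k‖ ^ 2) ≤
          Real.sqrt (∑ k, ‖(Complex.I / 2) * (inner ℂ (Y k p) p : ℂ)‖ ^ 2) +
          Real.sqrt (∑ k, ‖(-(Complex.I / 2)) * (inner ℂ (Y k q) q : ℂ)‖ ^ 2) := by
        have := sq2_add_le (fun k => (Complex.I / 2) * (inner ℂ (Y k p) p : ℂ))
          (fun k => (-(Complex.I / 2)) * (inner ℂ (Y k q) q : ℂ))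
        have he : Real.sqrt (∑ k, ‖c k‖ ^ 2) = Real.sqrt (∑ k,
            ‖(Complex.I / 2) * (inner ℂ (Y k p) p : ℂ)
              + (-(Complex.I / 2)) * (inner ℂ (Y k q) q : ℂ)‖ ^ 2) := by
          congr 1
          exact Finset.sum_congr rfl fun k _ => by rw [hck k]
        rw [he]
        exact this
      have hni : ‖(Complex.I / 2 : ℂ)‖ = 1 / 2 := by
        rw [norm_div, Complex.norm_I]
        norm_num
      have h2 : Real.sqrt (∑ k, ‖(Complex.I / 2) * (inner ℂ (Y k p) p : ℂ)‖ ^ 2)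
          = (1 / 2) * Real.sqrt (∑ k, ‖(inner ℂ (Y k p) p : ℂ)‖ ^ 2) := by
        rw [sq2_smul, hni]
      have h3 : Real.sqrt (∑ k, ‖(-(Complex.I / 2)) * (inner ℂ (Y k q) q : ℂ)‖ ^ 2)
          = (1 / 2) * Real.sqrt (∑ k, ‖(inner ℂ (Y k q) q : ℂ)‖ ^ 2) := by
        rw [sq2_smul, norm_neg, hni]
      have hpar : ‖p‖ ^ 2 + ‖q‖ ^ 2 = 2 := by
        have := parallelogram_law_with_norm ℂ x (Complex.I • y)
        have hIy : ‖Complex.I • y‖ = ‖y‖ := by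
          rw [norm_smul, Complex.norm_I, one_mul]
        rw [hIy] at this
        rw [hp, hq]
        nlinarith [this, hxy]
      calc Real.sqrt (∑ k, ‖c k‖ ^ 2)
          ≤ (1 / 2) * Real.sqrt (∑ k, ‖(inner ℂ (Y k p) p : ℂ)‖ ^ 2) +
            (1 / 2) * Real.sqrt (∑ k, ‖(inner ℂ (Y k q) q : ℂ)‖ ^ 2) := by
            rw [← h2, ← h3]; exact h1
        _ ≤ (1 / 2) * (‖p‖ ^ 2 * we Y) + (1 / 2) * (‖q‖ ^ 2 * we Y) := by
            exact add_le_add (mul_le_mul_of_nonneg_left (we_key Y p) (by norm_num))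
              (mul_le_mul_of_nonneg_left (we_key Y q) (by norm_num))
        _ = ((‖p‖ ^ 2 + ‖q‖ ^ 2) / 2) * we Y := by ring
        _ = we Y := by rw [hpar]; norm_num
    calc Real.sqrt (∑ k, ‖(inner ℂ (N k u) u : ℂ)‖ ^ 2)
        = Real.sqrt (∑ k, ‖b k + c k‖ ^ 2) := step0
      _ ≤ Real.sqrt (∑ k, ‖b k‖ ^ 2) + Real.sqrt (∑ k, ‖c k‖ ^ 2) := step1
      _ ≤ we X + we Y := add_le_add hbX hcY
end
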